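/- arXiv:math/0406186 — 6 statements merged into one kernel-verified Lean document; each statement's English description precedes it below -/
import Mathlib

section
/- Let H be a weak bialgebra and A a right H-comodule algebra. Then for all h ∈ H and a ∈ A: (i) ε(h₍₁₎ 1₍[1]₎) 1₍[0]₎ ⊗ h₍₂₎ = 1₍[0]₎ ⊗ h 1₍[1]₎, and (ii) ε(h 1₍[1]₎) 1₍[0]₎ a = ε(h a₍[1]₎) a₍[0]₎. -/
open TensorProduct LinearMap

/-- A weak bialgebra over a commutative ring `k`: a `k`-algebra with a
coalgebra structure whose comultiplication is multiplicative, the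
compatibility of the counit with multiplication and of the unit with
comultiplication being weakened to the weak bialgebra axioms. -/
structure WeakBialgebra (k H : Type) [CommRing k] [Ring H] [Algebra k H] where
  comul : H →ₗ[k] H ⊗[k] H
  counit : H →ₗ[k] k
  coassoc : ∀ h, (TensorProduct.assoc k H H H) ((rTensor H comul) (comul h)) =
    (lTensor H comul) (comul h)
  counit_comul : ∀ h, (TensorProduct.lid k H) ((rTensor H counit) (comul h)) = h
  comul_counit : ∀ h, (TensorProduct.rid k H) ((lTensor H counit) (comul h)) = h
  comul_mul : ∀ g h : H, comul (g * h) = comul g * comul h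
  /-- `Δ²(1) = (Δ(1)⊗1)(1⊗Δ(1))` -/
  weak_unit_l : rTensor H comul (comul 1) =
    (comul 1 ⊗ₜ[k] (1 : H)) *
      ((TensorProduct.assoc k H H H).symm ((1 : H) ⊗ₜ[k] comul 1))
  /-- `Δ²(1) = (1⊗Δ(1))(Δ(1)⊗1)` -/
  weak_unit_r : rTensor H comul (comul 1) =
    ((TensorProduct.assoc k H H H).symm ((1 : H) ⊗ₜ[k] comul 1)) *
      (comul 1 ⊗ₜ[k] (1 : H))
  /-- `ε(ghl) = ε(g h₍₁₎) ε(h₍₂₎ l)` -/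
  weak_counit_l : ∀ g h l : H, counit (g * h * l) =
    (LinearMap.mul' k k) ((TensorProduct.map (counit ∘ₗ mulLeft k g)
      (counit ∘ₗ mulRight k l)) (comul h))
  /-- `ε(ghl) = ε(g h₍₂₎) ε(h₍₁₎ l)` -/
  weak_counit_r : ∀ g h l : H, counit (g * h * l) =
    (LinearMap.mul' k k) ((TensorProduct.map (counit ∘ₗ mulRight k l)
      (counit ∘ₗ mulLeft k g)) (comul h))

/-- A right `H`-comodule algebra over a weak bialgebra `H`. -/
structure ComoduleAlgebra (k H A : Type) [CommRing k] [Ring H] [Algebra k H]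
    [Ring A] [Algebra k A] (W : WeakBialgebra k H) where
  rho : A →ₗ[k] A ⊗[k] H
  coassoc : ∀ a, (TensorProduct.assoc k A H H) ((rTensor H rho) (rho a)) =
    (lTensor A W.comul) (rho a)
  counit : ∀ a, (TensorProduct.rid k A) ((lTensor A W.counit) (rho a)) = a
  rho_mul : ∀ a b : A, rho (a * b) = rho a * rho b
  /-- `ρ²(1) = 1₍[0]₎ ⊗ 1₍[1]₎1₍₁₎ ⊗ 1₍₂₎` -/
  weak : rTensor H rho (rho 1) =
    ((rho 1) ⊗ₜ[k] (1 : H)) *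
      ((TensorProduct.assoc k A H H).symm ((1 : A) ⊗ₜ[k] W.comul 1))

set_option maxHeartbeats 1000000
set_option synthInstance.maxHeartbeats 200000

section Aux

variable {k H A : Type} [CommRing k] [Ring H] [Algebra k H] [Ring A] [Algebra k A]

private theorem tmt {B C : Type} [Ring B] [Algebra k B] [Ring C] [Algebra k C]
    (a c : B) (b d : C) :
    (a ⊗ₜ[k] b) * (c ⊗ₜ[k] d) = (a * c) ⊗ₜ[k] (b * d) :=
  Algebra.TensorProduct.tmul_mul_tmul a c b d

variable (W : WeakBialgebra k H) (R : ComoduleAlgebra k H A W)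

/-- Key collapse: `∑ᵢ ε(h₁ x) h₂ y`-map applied to `Δ m` gives `h m`. -/
private theorem wba_KC (h m : H) {ι : Type} (sι : Finset ι) (h1 h2 : ι → H)
    (hh : W.comul h = ∑ i ∈ sι, h1 i ⊗ₜ[k] h2 i) :
    ∑ i ∈ sι, (TensorProduct.lid k H)
      ((TensorProduct.map (W.counit ∘ₗ mulLeft k (h1 i)) (mulLeft k (h2 i))) (W.comul m))
      = h * m := by
  obtain ⟨S, hS⟩ := TensorProduct.exists_finset (W.comul m)
  have hc := W.counit_comul (h * m)
  rw [W.comul_mul, hh, hS, Finset.sum_mul_sum] at hc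
  simp only [tmt] at hc
  rw [hS]
  simp only [map_sum, TensorProduct.map_tmul, rTensor_tmul, TensorProduct.lid_tmul,
    coe_comp, Function.comp_apply, mulLeft_apply] at hc ⊢
  exact hc

/-- E1 : `∑ⱼ u0ⱼ ⊗ Δ(u1ⱼ) = ∑ⱼₗ u0ⱼ ⊗ (u1ⱼ e1ₗ ⊗ e2ₗ)`. -/
private theorem ca_E1 {κ : Type} (sκ : Finset κ) (u0 : κ → A) (u1 : κ → H)
    (hu : R.rho 1 = ∑ j ∈ sκ, u0 j ⊗ₜ[k] u1 j)
    (S : Finset (H × H)) (hS : W.comul 1 = ∑ p ∈ S, p.1 ⊗ₜ[k] p.2) :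
    ∑ j ∈ sκ, u0 j ⊗ₜ[k] (W.comul (u1 j)) =
      ∑ j ∈ sκ, ∑ p ∈ S, u0 j ⊗ₜ[k] ((u1 j * p.1) ⊗ₜ[k] p.2) := by
  have hco := R.coassoc 1
  rw [R.weak, hu, hS] at hco
  simp only [TensorProduct.tmul_sum, TensorProduct.sum_tmul, map_sum,
    TensorProduct.assoc_symm_tmul, Finset.sum_mul, Finset.mul_sum] at hco
  simp only [tmt] at hco
  simp only [mul_one, one_mul, map_sum, TensorProduct.assoc_tmul, lTensor_tmul] at hco
  exact hco.symm.trans Finset.sum_comm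
end Aux

section Aux2
variable {k H A : Type} [CommRing k] [Ring H] [Algebra k H] [Ring A] [Algebra k A]
variable (W : WeakBialgebra k H) (R : ComoduleAlgebra k H A W)

private theorem sum_comm3 {α β γ M : Type*} [AddCommMonoid M] (s : Finset α)
    (t : Finset β) (u : Finset γ) (f : α → β → γ → M) :
    ∑ i ∈ s, ∑ m ∈ t, ∑ l ∈ u, f i m l = ∑ l ∈ u, ∑ m ∈ t, ∑ i ∈ s, f i m l :=
  calc ∑ i ∈ s, ∑ m ∈ t, ∑ l ∈ u, f i m l
      = ∑ m ∈ t, ∑ i ∈ s, ∑ l ∈ u, f i m l := Finset.sum_comm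
    _ = ∑ m ∈ t, ∑ l ∈ u, ∑ i ∈ s, f i m l :=
        Finset.sum_congr rfl fun _ _ => Finset.sum_comm
    _ = ∑ l ∈ u, ∑ m ∈ t, ∑ i ∈ s, f i m l := Finset.sum_comm

private theorem wba_lemB (h : H) {ι : Type} (sι : Finset ι) (h1 h2 : ι → H)
    (hh : W.comul h = ∑ i ∈ sι, h1 i ⊗ₜ[k] h2 i)
    (S : Finset (H × H)) (hS : W.comul 1 = ∑ p ∈ S, p.1 ⊗ₜ[k] p.2) :
    ∑ i ∈ sι, ∑ p ∈ S, W.counit (h1 i * p.2) • (p.1 ⊗ₜ[k] h2 i) =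
      ∑ p ∈ S, p.1 ⊗ₜ[k] (h * p.2) := by
  classical
  -- the map χ
  set χ : H ⊗[k] H →ₗ[k] H ⊗[k] H :=
    ∑ p ∈ S, (TensorProduct.mk k H H p.1) ∘ₗ (TensorProduct.lid k H).toLinearMap ∘ₗ
      rTensor H (W.counit ∘ₗ mulRight k p.2) with hχ
  have hΔhΔ1 : W.comul h = ∑ i ∈ sι, ∑ m ∈ S, (h1 i * m.1) ⊗ₜ[k] (h2 i * m.2) := by
    rw [show W.comul h = W.comul h * W.comul 1 by rw [← W.comul_mul, mul_one], hh, hS,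
      Finset.sum_mul_sum]
    simp only [tmt]
  have X1 : χ (W.comul h) = ∑ i ∈ sι, ∑ p ∈ S, W.counit (h1 i * p.2) • (p.1 ⊗ₜ[k] h2 i) := by
    rw [hh]
    simp only [hχ, LinearMap.sum_apply, map_sum, coe_comp, Function.comp_apply,
      rTensor_tmul, mulRight_apply, LinearEquiv.coe_coe, TensorProduct.lid_tmul,
      map_smul, TensorProduct.mk_apply, TensorProduct.tmul_smul]
  have X2 : χ (W.comul h) =
      ∑ i ∈ sι, ∑ m ∈ S, ∑ p ∈ S, W.counit (h1 i * (m.1 * p.2)) • (p.1 ⊗ₜ[k] (h2 i * m.2)) := by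
    rw [hΔhΔ1]
    simp only [hχ, LinearMap.sum_apply, map_sum, coe_comp, Function.comp_apply,
      rTensor_tmul, mulRight_apply, LinearEquiv.coe_coe, TensorProduct.lid_tmul,
      map_smul, TensorProduct.mk_apply, TensorProduct.tmul_smul, mul_assoc]
  -- the map Φ = lTensor γ
  set γ : H ⊗[k] H →ₗ[k] H :=
    ∑ i ∈ sι, (TensorProduct.lid k H).toLinearMap ∘ₗ
      TensorProduct.map (W.counit ∘ₗ mulLeft k (h1 i)) (mulLeft k (h2 i)) with hγ
  have hγΔ : ∀ m : H, γ (W.comul m) = h * m := by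
    intro m
    rw [hγ, LinearMap.sum_apply]
    exact wba_KC W h m sι h1 h2 hh
  have hcoas := W.coassoc 1
  rw [W.weak_unit_r, hS] at hcoas
  simp only [TensorProduct.tmul_sum, TensorProduct.sum_tmul, map_sum,
    TensorProduct.assoc_symm_tmul, Finset.sum_mul, Finset.mul_sum] at hcoas
  simp only [tmt] at hcoas
  simp only [mul_one, one_mul, map_sum, TensorProduct.assoc_tmul, lTensor_tmul] at hcoas
  -- hcoas : ∑ l ∈ S, ∑ m ∈ S, m.1 ⊗ₜ ((l.1 * m.2) ⊗ₜ l.2) = ∑ p ∈ S, p.1 ⊗ₜ W.comul p.2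
  have Y := congrArg (⇑(lTensor H γ)) hcoas
  simp only [map_sum, lTensor_tmul] at Y
  have YR : ∑ p ∈ S, p.1 ⊗ₜ[k] γ (W.comul p.2) = ∑ p ∈ S, p.1 ⊗ₜ[k] (h * p.2) :=
    Finset.sum_congr rfl fun p _ => by rw [hγΔ]
  have YL : (∑ x ∈ S, ∑ y ∈ S, x.1 ⊗ₜ[k] γ ((y.1 * x.2) ⊗ₜ[k] y.2)) =
      ∑ i ∈ sι, ∑ m ∈ S, ∑ p ∈ S, W.counit (h1 i * (m.1 * p.2)) • (p.1 ⊗ₜ[k] (h2 i * m.2)) := by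
    simp only [hγ, LinearMap.sum_apply, coe_comp, Function.comp_apply,
      TensorProduct.map_tmul, mulLeft_apply, LinearEquiv.coe_coe, TensorProduct.lid_tmul,
      TensorProduct.tmul_sum, TensorProduct.tmul_smul]
    rw [sum_comm3]
  rw [YL, YR] at Y
  rw [← X1, X2]
  exact Y
end Aux2

section Parts
variable {k H A : Type} [CommRing k] [Ring H] [Algebra k H] [Ring A] [Algebra k A]
variable (W : WeakBialgebra k H) (R : ComoduleAlgebra k H A W)

private theorem part_i (h : H) {ι κ : Type} (sι : Finset ι) (sκ : Finset κ)
    (h1 h2 : ι → H) (u0 : κ → A) (u1 : κ → H)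
    (hh : W.comul h = ∑ i ∈ sι, h1 i ⊗ₜ[k] h2 i)
    (hu : R.rho 1 = ∑ j ∈ sκ, u0 j ⊗ₜ[k] u1 j) :
    ∑ i ∈ sι, ∑ j ∈ sκ, W.counit (h1 i * u1 j) • (u0 j ⊗ₜ[k] h2 i) =
      ∑ j ∈ sκ, u0 j ⊗ₜ[k] (h * u1 j) := by
  classical
  obtain ⟨S, hS⟩ := TensorProduct.exists_finset (W.comul (1 : H))
  have E1 := ca_E1 W R sκ u0 u1 hu S hS
  -- map Ψa
  set Ψa : A ⊗[k] (H ⊗[k] H) →ₗ[k] A ⊗[k] H :=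
    ∑ i ∈ sι, ((TensorProduct.mk k A H).flip (h2 i)) ∘ₗ (TensorProduct.rid k A).toLinearMap ∘ₗ
      lTensor A ((mul' k k) ∘ₗ TensorProduct.map (W.counit ∘ₗ mulRight k 1)
        (W.counit ∘ₗ mulLeft k (h1 i))) with hΨa
  have hwc : ∀ i j, (mul' k k) ((TensorProduct.map (W.counit ∘ₗ mulRight k 1)
      (W.counit ∘ₗ mulLeft k (h1 i))) (W.comul (u1 j))) = W.counit (h1 i * u1 j) := by
    intro i j
    rw [← W.weak_counit_r, mul_one]
  have A1 : Ψa (∑ j ∈ sκ, u0 j ⊗ₜ[k] W.comul (u1 j)) =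
      ∑ i ∈ sι, ∑ j ∈ sκ, W.counit (h1 i * u1 j) • (u0 j ⊗ₜ[k] h2 i) := by
    simp only [hΨa, LinearMap.sum_apply, map_sum, coe_comp, Function.comp_apply,
      lTensor_tmul, LinearEquiv.coe_coe, TensorProduct.rid_tmul, flip_apply,
      TensorProduct.mk_apply, hwc, ← TensorProduct.smul_tmul']
    exact Finset.sum_comm
  have A2 : Ψa (∑ j ∈ sκ, ∑ p ∈ S, u0 j ⊗ₜ[k] ((u1 j * p.1) ⊗ₜ[k] p.2)) =
      ∑ i ∈ sι, ∑ j ∈ sκ, ∑ p ∈ S,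
        (W.counit (u1 j * p.1) * W.counit (h1 i * p.2)) • (u0 j ⊗ₜ[k] h2 i) := by
    simp only [hΨa, LinearMap.sum_apply, map_sum, coe_comp, Function.comp_apply,
      lTensor_tmul, TensorProduct.map_tmul, mulRight_apply, mulLeft_apply, mul_one,
      mul'_apply, LinearEquiv.coe_coe, TensorProduct.rid_tmul, flip_apply,
      TensorProduct.mk_apply, ← TensorProduct.smul_tmul']
    rw [sum_comm3]
    exact Finset.sum_congr rfl fun _ _ => Finset.sum_comm
  -- map Ψ₂
  set Ψb : H ⊗[k] H →ₗ[k] A ⊗[k] H :=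
    ∑ j ∈ sκ, TensorProduct.map ((toSpanSingleton k A (u0 j)) ∘ₗ W.counit ∘ₗ
      mulLeft k (u1 j)) (LinearMap.id) with hΨb
  have B := congrArg (⇑Ψb) (wba_lemB W h sι h1 h2 hh S hS)
  have B1 : Ψb (∑ i ∈ sι, ∑ p ∈ S, W.counit (h1 i * p.2) • (p.1 ⊗ₜ[k] h2 i)) =
      ∑ i ∈ sι, ∑ j ∈ sκ, ∑ p ∈ S,
        (W.counit (u1 j * p.1) * W.counit (h1 i * p.2)) • (u0 j ⊗ₜ[k] h2 i) := by
    simp only [hΨb, LinearMap.sum_apply, map_sum, map_smul, TensorProduct.map_tmul,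
      coe_comp, Function.comp_apply, mulLeft_apply, toSpanSingleton_apply,
      LinearMap.id_coe, id_eq, ← TensorProduct.smul_tmul', smul_smul, Finset.smul_sum]
    refine Finset.sum_congr rfl fun i _ => ?_
    rw [Finset.sum_comm]
    exact Finset.sum_congr rfl fun j _ => Finset.sum_congr rfl fun p _ => by rw [mul_comm]
  have B2 : Ψb (∑ p ∈ S, p.1 ⊗ₜ[k] (h * p.2)) =
      ∑ j ∈ sκ, ∑ p ∈ S, W.counit (u1 j * p.1) • (u0 j ⊗ₜ[k] (h * p.2)) := by
    simp only [hΨb, LinearMap.sum_apply, map_sum, TensorProduct.map_tmul,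
      coe_comp, Function.comp_apply, mulLeft_apply, toSpanSingleton_apply,
      LinearMap.id_coe, id_eq, ← TensorProduct.smul_tmul']
    exact Finset.sum_comm
  -- map Ψ₃
  set Ψc : A ⊗[k] (H ⊗[k] H) →ₗ[k] A ⊗[k] H :=
    lTensor A (mulLeft k h ∘ₗ (TensorProduct.lid k H).toLinearMap ∘ₗ
      rTensor H W.counit) with hΨc
  have C1 : Ψc (∑ j ∈ sκ, u0 j ⊗ₜ[k] W.comul (u1 j)) =
      ∑ j ∈ sκ, u0 j ⊗ₜ[k] (h * u1 j) := by
    simp only [hΨc, map_sum, lTensor_tmul, coe_comp, Function.comp_apply,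
      LinearEquiv.coe_coe, W.counit_comul, mulLeft_apply]
  have C2 : Ψc (∑ j ∈ sκ, ∑ p ∈ S, u0 j ⊗ₜ[k] ((u1 j * p.1) ⊗ₜ[k] p.2)) =
      ∑ j ∈ sκ, ∑ p ∈ S, W.counit (u1 j * p.1) • (u0 j ⊗ₜ[k] (h * p.2)) := by
    simp only [hΨc, map_sum, lTensor_tmul, coe_comp, Function.comp_apply,
      rTensor_tmul, LinearEquiv.coe_coe, TensorProduct.lid_tmul, map_smul,
      mulLeft_apply, TensorProduct.tmul_smul]
  calc ∑ i ∈ sι, ∑ j ∈ sκ, W.counit (h1 i * u1 j) • (u0 j ⊗ₜ[k] h2 i)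
      = Ψa (∑ j ∈ sκ, u0 j ⊗ₜ[k] W.comul (u1 j)) := A1.symm
    _ = Ψa (∑ j ∈ sκ, ∑ p ∈ S, u0 j ⊗ₜ[k] ((u1 j * p.1) ⊗ₜ[k] p.2)) := by rw [E1]
    _ = ∑ i ∈ sι, ∑ j ∈ sκ, ∑ p ∈ S,
        (W.counit (u1 j * p.1) * W.counit (h1 i * p.2)) • (u0 j ⊗ₜ[k] h2 i) := A2
    _ = Ψb (∑ i ∈ sι, ∑ p ∈ S, W.counit (h1 i * p.2) • (p.1 ⊗ₜ[k] h2 i)) := B1.symm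
    _ = Ψb (∑ p ∈ S, p.1 ⊗ₜ[k] (h * p.2)) := B
    _ = ∑ j ∈ sκ, ∑ p ∈ S, W.counit (u1 j * p.1) • (u0 j ⊗ₜ[k] (h * p.2)) := B2
    _ = Ψc (∑ j ∈ sκ, ∑ p ∈ S, u0 j ⊗ₜ[k] ((u1 j * p.1) ⊗ₜ[k] p.2)) := C2.symm
    _ = Ψc (∑ j ∈ sκ, u0 j ⊗ₜ[k] W.comul (u1 j)) := by rw [E1]
    _ = ∑ j ∈ sκ, u0 j ⊗ₜ[k] (h * u1 j) := C1

private theorem part_ii (h : H) (a : A) {κ κ' : Type} (sκ : Finset κ) (sκ' : Finset κ')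
    (u0 : κ → A) (u1 : κ → H) (a0 : κ' → A) (a1 : κ' → H)
    (hu : R.rho 1 = ∑ j ∈ sκ, u0 j ⊗ₜ[k] u1 j)
    (ha : R.rho a = ∑ j ∈ sκ', a0 j ⊗ₜ[k] a1 j) :
    ∑ j ∈ sκ, W.counit (h * u1 j) • (u0 j * a) =
      ∑ j ∈ sκ', W.counit (h * a1 j) • a0 j := by
  classical
  obtain ⟨S, hS⟩ := TensorProduct.exists_finset (W.comul (1 : H))
  have E1 := ca_E1 W R sκ u0 u1 hu S hS
  set Λ : A ⊗[k] H →ₗ[k] A :=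
    (TensorProduct.rid k A).toLinearMap ∘ₗ lTensor A (W.counit ∘ₗ mulLeft k h) with hΛ
  set Θ₁ : A ⊗[k] H →ₗ[k] A :=
    (TensorProduct.rid k A).toLinearMap ∘ₗ lTensor A W.counit ∘ₗ
      mulRight k (R.rho a) with hΘ₁
  set Θ : (A ⊗[k] H) ⊗[k] H →ₗ[k] A := Λ ∘ₗ rTensor H Θ₁ with hΘ
  have hΘ₁ρ : ∀ b : A, Θ₁ (R.rho b) = b * a := by
    intro b
    rw [hΘ₁]
    simp only [coe_comp, Function.comp_apply, mulRight_apply, LinearEquiv.coe_coe]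
    rw [← R.rho_mul]
    exact R.counit (b * a)
  have SA := congrArg (⇑Θ) R.weak
  have SAL : Θ (rTensor H R.rho (R.rho 1)) = ∑ j ∈ sκ, W.counit (h * u1 j) • (u0 j * a) := by
    rw [hu]
    simp only [hΘ, coe_comp, Function.comp_apply, map_sum, rTensor_tmul, hΘ₁ρ]
    simp only [hΛ, coe_comp, Function.comp_apply, map_sum, lTensor_tmul,
      LinearEquiv.coe_coe, TensorProduct.rid_tmul, mulLeft_apply]
  have SAR : Θ ((R.rho 1) ⊗ₜ[k] (1 : H) *
      (TensorProduct.assoc k A H H).symm ((1 : A) ⊗ₜ[k] W.comul 1)) =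
      ∑ j ∈ sκ, ∑ p ∈ S, ∑ j' ∈ sκ',
        (W.counit (h * p.2) * W.counit (u1 j * p.1 * a1 j')) • (u0 j * a0 j') := by
    rw [hu, hS]
    simp only [TensorProduct.tmul_sum, TensorProduct.sum_tmul, map_sum,
      TensorProduct.assoc_symm_tmul, Finset.sum_mul, Finset.mul_sum]
    simp only [tmt]
    simp only [mul_one, one_mul]
    simp only [hΘ, coe_comp, Function.comp_apply, map_sum, rTensor_tmul]
    simp only [hΘ₁, coe_comp, Function.comp_apply, mulRight_apply, LinearEquiv.coe_coe]
    rw [ha]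
    simp only [Finset.mul_sum]
    simp only [tmt]
    simp only [map_sum, lTensor_tmul, TensorProduct.rid_tmul]
    simp only [hΛ, coe_comp, Function.comp_apply, map_sum, map_smul, lTensor_tmul,
      LinearEquiv.coe_coe, TensorProduct.rid_tmul, mulLeft_apply, smul_smul,
      Finset.smul_sum]
    exact Finset.sum_comm
  have SBL : Λ (R.rho a) = ∑ j ∈ sκ', W.counit (h * a1 j) • a0 j := by
    rw [ha]
    simp only [hΛ, coe_comp, Function.comp_apply, map_sum, lTensor_tmul,
      LinearEquiv.coe_coe, TensorProduct.rid_tmul, mulLeft_apply]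
  have SB2 : Λ (R.rho 1 * R.rho a) =
      ∑ j ∈ sκ, ∑ j' ∈ sκ', W.counit (h * (u1 j * a1 j')) • (u0 j * a0 j') := by
    rw [hu, ha, Finset.sum_mul_sum]
    simp only [tmt]
    simp only [hΛ, coe_comp, Function.comp_apply, map_sum, lTensor_tmul,
      LinearEquiv.coe_coe, TensorProduct.rid_tmul, mulLeft_apply]
  have hwc2 : ∀ (j : κ) (j' : κ'), (mul' k k)
      ((TensorProduct.map (W.counit ∘ₗ mulRight k (a1 j')) (W.counit ∘ₗ mulLeft k h))
        (W.comul (u1 j))) = W.counit (h * (u1 j * a1 j')) := by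
    intro j j'
    rw [← W.weak_counit_r, mul_assoc]
  set Ξ : A ⊗[k] (H ⊗[k] H) →ₗ[k] A :=
    ∑ j' ∈ sκ', mulRight k (a0 j') ∘ₗ (TensorProduct.rid k A).toLinearMap ∘ₗ
      lTensor A ((mul' k k) ∘ₗ TensorProduct.map (W.counit ∘ₗ mulRight k (a1 j'))
        (W.counit ∘ₗ mulLeft k h)) with hΞ
  have X1 : Ξ (∑ j ∈ sκ, u0 j ⊗ₜ[k] W.comul (u1 j)) =
      ∑ j ∈ sκ, ∑ j' ∈ sκ', W.counit (h * (u1 j * a1 j')) • (u0 j * a0 j') := by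
    simp only [hΞ, LinearMap.sum_apply, map_sum, coe_comp, Function.comp_apply,
      lTensor_tmul, hwc2, LinearEquiv.coe_coe, TensorProduct.rid_tmul,
      mulRight_apply, smul_mul_assoc]
  have X2 : Ξ (∑ j ∈ sκ, ∑ p ∈ S, u0 j ⊗ₜ[k] ((u1 j * p.1) ⊗ₜ[k] p.2)) =
      ∑ j ∈ sκ, ∑ p ∈ S, ∑ j' ∈ sκ',
        (W.counit (h * p.2) * W.counit (u1 j * p.1 * a1 j')) • (u0 j * a0 j') := by
    simp only [hΞ, LinearMap.sum_apply, map_sum, coe_comp, Function.comp_apply,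
      lTensor_tmul, TensorProduct.map_tmul, mulRight_apply, mulLeft_apply, mul'_apply,
      LinearEquiv.coe_coe, TensorProduct.rid_tmul, smul_mul_assoc]
    refine Finset.sum_congr rfl fun j _ => Finset.sum_congr rfl fun p _ =>
      Finset.sum_congr rfl fun j' _ => ?_
    rw [mul_comm]
  calc ∑ j ∈ sκ, W.counit (h * u1 j) • (u0 j * a)
      = Θ (rTensor H R.rho (R.rho 1)) := SAL.symm
    _ = ∑ j ∈ sκ, ∑ p ∈ S, ∑ j' ∈ sκ',
        (W.counit (h * p.2) * W.counit (u1 j * p.1 * a1 j')) • (u0 j * a0 j') := by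
        rw [SA]; exact SAR
    _ = Ξ (∑ j ∈ sκ, ∑ p ∈ S, u0 j ⊗ₜ[k] ((u1 j * p.1) ⊗ₜ[k] p.2)) := X2.symm
    _ = Ξ (∑ j ∈ sκ, u0 j ⊗ₜ[k] W.comul (u1 j)) := by rw [E1]
    _ = ∑ j ∈ sκ, ∑ j' ∈ sκ', W.counit (h * (u1 j * a1 j')) • (u0 j * a0 j') := X1
    _ = Λ (R.rho 1 * R.rho a) := SB2.symm
    _ = Λ (R.rho a) := by rw [← R.rho_mul, one_mul]
    _ = ∑ j ∈ sκ', W.counit (h * a1 j) • a0 j := SBL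
end Parts


/-- Let `H` be a weak bialgebra and `A` a right `H`-comodule
algebra. Then, in Sweedler notation (i.e. for arbitrary finite
representations of `Δ(h)`, `ρ(1)` and `ρ(a)` as sums of pure tensors):
(i) `ε(h₍₁₎ 1₍[1]₎) 1₍[0]₎ ⊗ h₍₂₎ = 1₍[0]₎ ⊗ h 1₍[1]₎` in `A ⊗ H`, and
(ii) `ε(h 1₍[1]₎) 1₍[0]₎ a = ε(h a₍[1]₎) a₍[0]₎` in `A`. -/
theorem weak_comodule_algebra_counit_identities
    (k H A : Type) [CommRing k] [Ring H] [Algebra k H] [Ring A] [Algebra k A]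
    (W : WeakBialgebra k H) (R : ComoduleAlgebra k H A W) :
    (∀ (h : H) (ι κ : Type) (sι : Finset ι) (sκ : Finset κ)
      (h1 h2 : ι → H) (u0 : κ → A) (u1 : κ → H),
      W.comul h = ∑ i ∈ sι, h1 i ⊗ₜ[k] h2 i →
      R.rho 1 = ∑ j ∈ sκ, u0 j ⊗ₜ[k] u1 j →
      ∑ i ∈ sι, ∑ j ∈ sκ, W.counit (h1 i * u1 j) • (u0 j ⊗ₜ[k] h2 i) =
        ∑ j ∈ sκ, u0 j ⊗ₜ[k] (h * u1 j)) ∧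
    (∀ (h : H) (a : A) (κ κ' : Type) (sκ : Finset κ) (sκ' : Finset κ')
      (u0 : κ → A) (u1 : κ → H) (a0 : κ' → A) (a1 : κ' → H),
      R.rho 1 = ∑ j ∈ sκ, u0 j ⊗ₜ[k] u1 j →
      R.rho a = ∑ j ∈ sκ', a0 j ⊗ₜ[k] a1 j →
      ∑ j ∈ sκ, W.counit (h * u1 j) • (u0 j * a) =
        ∑ j ∈ sκ', W.counit (h * a1 j) • a0 j) := by
  constructor
  · intro h ι κ sι sκ h1 h2 u0 u1 hh hu
    exact part_i W R h sι sκ h1 h2 u0 u1 hh hu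
  · intro h a κ κ' sκ sκ' u0 u1 a0 a1 hu ha
    exact part_ii W R h a sκ sκ' u0 u1 a0 a1 hu ha
end

section
/- Let H be a weak bialgebra and A a right H-comodule algebra, and let C be the associated coring Im(g) ⊆ A⊗H. Then the left dual ring *C = Hom_{A-}(C, A) is isomorphic to the ring Hom̲(H,A) = {f : H → A | f(h) = 1₍[0]₎ f(h 1₍[1]₎) for all h}, with multiplication (f # g)(h) = f(h₍₂₎)₍[0]₎ · g(h₍₁₎ f(h₍₂₎)₍[1]₎). -/
open TensorProduct LinearMap

variable (k H A : Type) [CommRing k] [Ring H] [Algebra k H] [Ring A] [Algebra k A]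
variable (W : WeakBialgebra k H) (R : ComoduleAlgebra k H A W)

/-- `a ↦ a ⊗ 1`. -/
noncomputable def iA : A →ₗ[k] A ⊗[k] H := (TensorProduct.mk k A H).flip 1

/-- `h ↦ 1 ⊗ h`. -/
noncomputable def iH : H →ₗ[k] A ⊗[k] H := TensorProduct.mk k A H 1

/-- The image `C = Im(g)` of the projection `g(a⊗h) = a1₍[0]₎ ⊗ h1₍[1]₎`,
i.e. `g` is right multiplication by the idempotent `ρ(1)` in the ring
`A ⊗ H`. -/
noncomputable def CC : Submodule k (A ⊗[k] H) :=
  LinearMap.range (mulRight k (R.rho 1))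

/-- The left `A`-action `b · c = (b ⊗ 1) c` on `C`. -/
noncomputable def lActMap (b : A) : CC k H A W R →ₗ[k] CC k H A W R :=
  (mulLeft k (iA k H A b)).restrict (fun x hx => by
    obtain ⟨y, hy⟩ := hx
    exact ⟨iA k H A b * y, by
      simp only [LinearMap.mulRight_apply, LinearMap.mulLeft_apply] at *
      rw [← hy, mul_assoc]⟩)

/-- The right `A`-action `c · b = c ρ(b)` on `C`. -/
noncomputable def rActMap (b : A) : CC k H A W R →ₗ[k] CC k H A W R :=
  (mulRight k (R.rho b)).restrict (fun x _hx =>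
    ⟨x * R.rho b, by
      simp only [LinearMap.mulRight_apply]
      rw [mul_assoc, ← R.rho_mul, mul_one]⟩)

/-- Corestriction of `g` to `C`. -/
noncomputable def pC : A ⊗[k] H →ₗ[k] CC k H A W R :=
  LinearMap.codRestrict (CC k H A W R) (mulRight k (R.rho 1)) (fun x => ⟨x, rfl⟩)

/-- `h ↦ g(1 ⊗ h) = 1₍[0]₎ ⊗ h 1₍[1]₎`, with values in `C`. -/
noncomputable def pH : H →ₗ[k] CC k H A W R :=
  LinearMap.codRestrict (CC k H A W R) (mulRight k (R.rho 1) ∘ₗ iH k H A)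
    (fun h => ⟨iH k H A h, rfl⟩)

/-- The comultiplication of the coring `C`, at the level of representatives in
`C ⊗ₖ C`: `Δ_C(a ⊗ h) = ((a ⊗ h₍₁₎)ρ(1)) ⊗ ((1 ⊗ h₍₂₎)ρ(1))`. -/
noncomputable def DeltaC : CC k H A W R →ₗ[k] CC k H A W R ⊗[k] CC k H A W R :=
  (TensorProduct.map (pC k H A W R) (pH k H A W R)) ∘ₗ
    (TensorProduct.assoc k A H H).symm.toLinearMap ∘ₗ
    (lTensor A W.comul) ∘ₗ (CC k H A W R).subtype

/-- The counit of the coring `C`: `ε_C(1₍[0]₎ ⊗ h1₍[1]₎) = 1₍[0]₎ ε(h1₍[1]₎)`. -/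
noncomputable def epsC : CC k H A W R →ₗ[k] A :=
  (TensorProduct.rid k A).toLinearMap ∘ₗ (lTensor A W.counit) ∘ₗ
    (CC k H A W R).subtype

/-- The `A`-balancing relations in `C ⊗ₖ C`, whose quotient is `C ⊗_A C`. -/
noncomputable def balRel : Submodule k (CC k H A W R ⊗[k] CC k H A W R) :=
  Submodule.span k {z | ∃ (c c' : CC k H A W R) (b : A),
    z = (rActMap k H A W R b c) ⊗ₜ[k] c' - c ⊗ₜ[k] (lActMap k H A W R b c')}


noncomputable instance tripleAddCommGroup :
    AddCommGroup (CC k H A W R ⊗[k] (CC k H A W R ⊗[k] CC k H A W R)) := by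
  exact @TensorProduct.addCommGroup k _ (CC k H A W R)
    (CC k H A W R ⊗[k] CC k H A W R) _ _ _ _

/-- The `A`-balancing relations in `C ⊗ₖ C ⊗ₖ C`, whose quotient is
`C ⊗_A C ⊗_A C`. -/
noncomputable def balRel3 :
    Submodule k (CC k H A W R ⊗[k] (CC k H A W R ⊗[k] CC k H A W R)) :=
  Submodule.span k {z | (∃ (c c' c'' : CC k H A W R) (b : A),
      z = (rActMap k H A W R b c) ⊗ₜ[k] (c' ⊗ₜ[k] c'') -
        c ⊗ₜ[k] ((lActMap k H A W R b c') ⊗ₜ[k] c'')) ∨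
    (∃ (c c' c'' : CC k H A W R) (b : A),
      z = c ⊗ₜ[k] ((rActMap k H A W R b c') ⊗ₜ[k] c'') -
        c ⊗ₜ[k] (c' ⊗ₜ[k] (lActMap k H A W R b c'')))}

/-- `ρ(1)` as an element of `C`. -/
noncomputable def oneC : CC k H A W R :=
  ⟨R.rho 1, R.rho 1, by
    simp only [LinearMap.mulRight_apply]
    rw [← R.rho_mul, one_mul]⟩


lemma rActMap_add (b b' : A) (c : CC k H A W R) :
    rActMap k H A W R (b + b') c =
      rActMap k H A W R b c + rActMap k H A W R b' c := by
  apply Subtype.ext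
  simp [rActMap, LinearMap.restrict_apply, map_add, mul_add]
  rfl

lemma rActMap_smul (t : k) (b : A) (c : CC k H A W R) :
    rActMap k H A W R (t • b) c = t • rActMap k H A W R b c := by
  apply Subtype.ext
  simp [rActMap, LinearMap.restrict_apply, map_smul, mul_smul_comm]
  rfl

/-- The condition defining `Hom̲(H,A) ⊆ Hom(H,A)`:
`f(h) = 1₍[0]₎ f(h 1₍[1]₎)` for all `h`. -/
noncomputable def homCond (f : H →ₗ[k] A) : Prop :=
  ∀ h : H, f h = LinearMap.mul' k A
    ((TensorProduct.map LinearMap.id f) ((iH k H A h) * R.rho 1))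

/-- The multiplication `(f # g)(h) = f(h₍₂₎)₍[0]₎ g(h₍₁₎ f(h₍₂₎)₍[1]₎)` on
`Hom̲(H,A)`. -/
noncomputable def prodH (f g : H →ₗ[k] A) : H →ₗ[k] A :=
  (TensorProduct.lift (LinearMap.mk₂ k
    (fun h₁ h₂ => LinearMap.mul' k A
      ((TensorProduct.map LinearMap.id g) ((iH k H A h₁) * R.rho (f h₂))))
    (by intro a b c; simp [map_add, add_mul])
    (by intro t a c; simp [map_smul, smul_mul_assoc])
    (by intro a b c; simp [map_add, mul_add])
    (by intro t a c; simp [map_smul, mul_smul_comm]))) ∘ₗ W.comul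

/-- The multiplication `(φ # ψ)(c) = ψ(c₍₁₎ φ(c₍₂₎))` on `*C = ₐHom(C,A)`. -/
noncomputable def starProd (φ ψ : CC k H A W R →ₗ[k] A) :
    CC k H A W R →ₗ[k] A :=
  (TensorProduct.lift (LinearMap.mk₂ k
    (fun c₁ c₂ : CC k H A W R => ψ (rActMap k H A W R (φ c₂) c₁))
    (by intro a b c; simp [map_add])
    (by intro t a c; simp [map_smul])
    (by intro a b c; simp [map_add, rActMap_add])
    (by intro t a c; simp [map_smul, rActMap_smul]))) ∘ₗ DeltaC k H A W R

/-- The map `α : *C → Hom̲(H,A)`, `α(φ)(h) = φ(1₍[0]₎ ⊗ h 1₍[1]₎)`. -/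
noncomputable def alphaMap (φ : CC k H A W R →ₗ[k] A) : H →ₗ[k] A :=
  φ ∘ₗ pH k H A W R

section Aux
variable {k H A W R}

lemma rho1_idem : R.rho 1 * R.rho 1 = R.rho 1 := by rw [← R.rho_mul, one_mul]

lemma pC_val (y : A ⊗[k] H) : (pC k H A W R y : A ⊗[k] H) = y * R.rho 1 := rfl

lemma pH_val (h : H) : (pH k H A W R h : A ⊗[k] H) = iH k H A h * R.rho 1 := rfl

lemma lAct_val (b : A) (c : CC k H A W R) :
    (lActMap k H A W R b c : A ⊗[k] H) = iA k H A b * (c : A ⊗[k] H) := rfl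

lemma rAct_val (b : A) (c : CC k H A W R) :
    (rActMap k H A W R b c : A ⊗[k] H) = (c : A ⊗[k] H) * R.rho b := rfl

lemma pC_tmul (a : A) (h : H) :
    pC k H A W R (a ⊗ₜ[k] h) = lActMap k H A W R a (pH k H A W R h) := by
  apply Subtype.ext
  rw [pC_val, lAct_val, pH_val, ← mul_assoc]
  congr 1
  simp [iA, iH, Algebra.TensorProduct.tmul_mul_tmul]

end Aux

section Aux2
variable {k H A W R}

lemma master (φ : CC k H A W R →ₗ[k] A)
    (hφ : ∀ (b : A) (c : CC k H A W R), φ (lActMap k H A W R b c) = b * φ c)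
    (y : A ⊗[k] H) :
    φ (pC k H A W R y) =
      LinearMap.mul' k A ((TensorProduct.map LinearMap.id (φ ∘ₗ pH k H A W R)) y) := by
  have : φ ∘ₗ pC k H A W R =
      LinearMap.mul' k A ∘ₗ (TensorProduct.map LinearMap.id (φ ∘ₗ pH k H A W R)) := by
    apply TensorProduct.ext'
    intro a h
    simp only [LinearMap.comp_apply, TensorProduct.map_tmul, LinearMap.id_coe, id_eq,
      LinearMap.mul'_apply, pC_tmul, hφ]
  exact LinearMap.congr_fun this y

lemma pH_eq_pC (h : H) :
    pH k H A W R h = pC k H A W R (iH k H A h * R.rho 1) := by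
  apply Subtype.ext
  rw [pH_val, pC_val, mul_assoc, rho1_idem]

lemma part1 (φ : CC k H A W R →ₗ[k] A)
    (hφ : ∀ (b : A) (c : CC k H A W R), φ (lActMap k H A W R b c) = b * φ c) :
    homCond k H A W R (alphaMap k H A W R φ) := by
  intro h
  show φ (pH k H A W R h) = _
  rw [pH_eq_pC, master φ hφ]
  rfl

end Aux2

section Aux3
variable {k H A W R}

lemma part2 (φ ψ : CC k H A W R →ₗ[k] A)
    (hφ : ∀ (b : A) (c : CC k H A W R), φ (lActMap k H A W R b c) = b * φ c)
    (hψ : ∀ (b : A) (c : CC k H A W R), ψ (lActMap k H A W R b c) = b * ψ c)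
    (hα : alphaMap k H A W R φ = alphaMap k H A W R ψ) : φ = ψ := by
  ext c
  obtain ⟨y, hy⟩ := c.2
  have hc : c = pC k H A W R y := Subtype.ext hy.symm
  have hα' : φ ∘ₗ pH k H A W R = ψ ∘ₗ pH k H A W R := hα
  rw [hc, master φ hφ, master ψ hψ, hα']

lemma part3 (f : H →ₗ[k] A) (hf : homCond k H A W R f) :
    ∃ φ : CC k H A W R →ₗ[k] A,
      (∀ (b : A) (c : CC k H A W R), φ (lActMap k H A W R b c) = b * φ c) ∧
      alphaMap k H A W R φ = f := by
  refine ⟨LinearMap.mul' k A ∘ₗ (TensorProduct.map LinearMap.id f) ∘ₗ (CC k H A W R).subtype,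
    ?_, ?_⟩
  · intro b c
    have key : LinearMap.mul' k A ∘ₗ (TensorProduct.map LinearMap.id f) ∘ₗ
        LinearMap.mulLeft k (iA k H A b) =
        LinearMap.mulLeft k b ∘ₗ LinearMap.mul' k A ∘ₗ
          (TensorProduct.map LinearMap.id f) := by
      apply TensorProduct.ext'
      intro a h
      simp only [LinearMap.comp_apply, LinearMap.mulLeft_apply, iA,
        LinearMap.flip_apply, TensorProduct.mk_apply,
        Algebra.TensorProduct.tmul_mul_tmul, one_mul,
        TensorProduct.map_tmul, LinearMap.id_coe, id_eq, LinearMap.mul'_apply, mul_assoc]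
    have := LinearMap.congr_fun key (c : A ⊗[k] H)
    simpa only [LinearMap.comp_apply, LinearMap.mulLeft_apply, Submodule.coe_subtype,
      lAct_val] using this
  · ext h
    exact (hf h).symm

end Aux3

/-- `Ψ(y) = (mul ∘ (id ⊗ αψ))(y)`. -/
noncomputable def PsiMap (ψ : CC k H A W R →ₗ[k] A) : A ⊗[k] H →ₗ[k] A :=
  LinearMap.mul' k A ∘ₗ (TensorProduct.map LinearMap.id (alphaMap k H A W R ψ))

/-- `T(y ⊗ g) = Ψ(y ρ(αφ(g)))`. -/
noncomputable def TMap (φ ψ : CC k H A W R →ₗ[k] A) :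
    (A ⊗[k] H) ⊗[k] H →ₗ[k] A :=
  TensorProduct.lift (LinearMap.mk₂ k
    (fun y g => PsiMap k H A W R ψ (y * R.rho (alphaMap k H A W R φ g)))
    (by intro y y' g; simp [add_mul, map_add])
    (by intro t y g; simp [smul_mul_assoc, map_smul])
    (by intro y g g'; simp [map_add, mul_add])
    (by intro t y g; simp [map_smul, mul_smul_comm]))

section Aux4
variable {k H A W R}

lemma TMap_tmul (φ ψ : CC k H A W R →ₗ[k] A) (y : A ⊗[k] H) (g : H) :
    TMap k H A W R φ ψ (y ⊗ₜ[k] g) =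
      PsiMap k H A W R ψ (y * R.rho (alphaMap k H A W R φ g)) := by
  simp [TMap]

lemma rAct_pC (b : A) (y : A ⊗[k] H) :
    rActMap k H A W R b (pC k H A W R y) = pC k H A W R (y * R.rho b) := by
  apply Subtype.ext
  rw [rAct_val, pC_val, pC_val, mul_assoc, mul_assoc, ← R.rho_mul, ← R.rho_mul,
    one_mul, mul_one]

lemma assoc_symm_mul (x y : A ⊗[k] (H ⊗[k] H)) :
    (TensorProduct.assoc k A H H).symm (x * y) =
      (TensorProduct.assoc k A H H).symm x * (TensorProduct.assoc k A H H).symm y := by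
  have h : ∀ z : A ⊗[k] (H ⊗[k] H), (TensorProduct.assoc k A H H).symm z =
      (Algebra.TensorProduct.assoc k k k A H H).symm z := fun z => rfl
  rw [h, h, h, map_mul]

lemma lT_mul (x y : A ⊗[k] H) :
    lTensor A W.comul (x * y) = lTensor A W.comul x * lTensor A W.comul y := by
  induction x using TensorProduct.induction_on with
  | zero => simp
  | tmul a h =>
    induction y using TensorProduct.induction_on with
    | zero => simp
    | tmul b g => simp [Algebra.TensorProduct.tmul_mul_tmul, W.comul_mul]
    | add y₁ y₂ ih1 ih2 => simp only [mul_add, map_add, ih1, ih2]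
  | add x₁ x₂ ih1 ih2 => simp only [add_mul, map_add, ih1, ih2]

lemma assoc_symm_one_tmul (w : H ⊗[k] H) :
    (TensorProduct.assoc k A H H).symm ((1 : A) ⊗ₜ[k] w) =
      (TensorProduct.map (iH k H A) LinearMap.id) w := by
  induction w using TensorProduct.induction_on with
  | zero => rw [TensorProduct.tmul_zero]; exact ((TensorProduct.assoc k A H H).symm.map_zero).trans (TensorProduct.map (iH k H A) LinearMap.id).map_zero.symm
  | tmul h₁ h₂ => simp [iH]
  | add w₁ w₂ ih1 ih2 => simp only [TensorProduct.tmul_add, map_add, ih1, ih2]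

lemma lhs_chain (h : H) :
    (TensorProduct.assoc k A H H).symm
        (lTensor A W.comul ((pH k H A W R h : A ⊗[k] H))) =
      (TensorProduct.map (iH k H A) LinearMap.id) (W.comul h) *
        rTensor H R.rho (R.rho 1) := by
  rw [pH_val, lT_mul, assoc_symm_mul, ← R.coassoc 1,
    LinearEquiv.symm_apply_apply]
  congr 1

end Aux4

section Aux5
set_option synthInstance.maxHeartbeats 1000000
set_option maxHeartbeats 1000000
variable {k H A W R}

lemma starProd_apply (φ ψ : CC k H A W R →ₗ[k] A)
    (hψ : ∀ (b : A) (c : CC k H A W R), ψ (lActMap k H A W R b c) = b * ψ c)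
    (c : CC k H A W R) :
    starProd k H A W R φ ψ c =
      TMap k H A W R φ ψ
        ((TensorProduct.assoc k A H H).symm (lTensor A W.comul (c : A ⊗[k] H))) := by
  have expand : starProd k H A W R φ ψ c =
      (TensorProduct.lift (LinearMap.mk₂ k
        (fun c₁ c₂ : CC k H A W R => ψ (rActMap k H A W R (φ c₂) c₁))
        (by intro a b c; simp [map_add])
        (by intro t a c; simp [map_smul])
        (by intro a b c; simp [map_add, rActMap_add])
        (by intro t a c; simp [map_smul, rActMap_smul])))
      ((TensorProduct.map (pC k H A W R) (pH k H A W R))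
        ((TensorProduct.assoc k A H H).symm (lTensor A W.comul (c : A ⊗[k] H)))) := rfl
  rw [expand]
  generalize (TensorProduct.assoc k A H H).symm (lTensor A W.comul (c : A ⊗[k] H)) = z
  induction z using TensorProduct.induction_on with
  | zero => simp
  | tmul y g =>
    rw [TensorProduct.map_tmul, TensorProduct.lift.tmul, LinearMap.mk₂_apply, TMap_tmul]
    show ψ (rActMap k H A W R (φ (pH k H A W R g)) (pC k H A W R y)) = _
    rw [rAct_pC, master ψ hψ]
    rfl
  | add z₁ z₂ ih1 ih2 => simp only [map_add, ih1, ih2]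

lemma stepE (φ ψ : CC k H A W R →ₗ[k] A)
    (hφcond : homCond k H A W R (alphaMap k H A W R φ))
    (u : (A ⊗[k] H) ⊗[k] H) :
    TMap k H A W R φ ψ (u * rTensor H R.rho (R.rho 1)) =
      TMap k H A W R φ ψ u := by
  have key : TMap k H A W R φ ψ ∘ₗ LinearMap.mulRight k (rTensor H R.rho (R.rho 1)) =
      TMap k H A W R φ ψ := by
    apply TensorProduct.ext'
    intro y g
    simp only [LinearMap.comp_apply, LinearMap.mulRight_apply]
    rw [TMap_tmul]
    -- reduce to a linear statement in `ρ(1)`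
    have hJK : TMap k H A W R φ ψ ∘ₗ LinearMap.mulLeft k (y ⊗ₜ[k] g) ∘ₗ
          rTensor H R.rho =
        PsiMap k H A W R ψ ∘ₗ LinearMap.mulLeft k y ∘ₗ R.rho ∘ₗ LinearMap.mul' k A ∘ₗ
          (TensorProduct.map LinearMap.id (alphaMap k H A W R φ)) ∘ₗ
          LinearMap.mulLeft k (iH k H A g) := by
      apply TensorProduct.ext'
      intro a h'
      simp only [LinearMap.comp_apply, LinearMap.mulLeft_apply, rTensor_tmul]
      rw [Algebra.TensorProduct.tmul_mul_tmul, TMap_tmul]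
      have : iH k H A g * a ⊗ₜ[k] h' = a ⊗ₜ[k] (g * h') := by
        simp [iH, Algebra.TensorProduct.tmul_mul_tmul]
      rw [this, TensorProduct.map_tmul, LinearMap.mul'_apply, LinearMap.id_coe, id_eq,
        mul_assoc, ← R.rho_mul]
    have h1 := LinearMap.congr_fun hJK (R.rho 1)
    simp only [LinearMap.comp_apply, LinearMap.mulLeft_apply] at h1
    rw [h1, ← hφcond g]
  exact LinearMap.congr_fun key u

lemma stepF (φ ψ : CC k H A W R →ₗ[k] A) (h : H) :
    prodH k H A W R (alphaMap k H A W R φ) (alphaMap k H A W R ψ) h =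
      TMap k H A W R φ ψ
        ((TensorProduct.map (iH k H A) LinearMap.id) (W.comul h)) := by
  have expand : prodH k H A W R (alphaMap k H A W R φ) (alphaMap k H A W R ψ) h =
      (TensorProduct.lift (LinearMap.mk₂ k
        (fun h₁ h₂ => LinearMap.mul' k A
          ((TensorProduct.map LinearMap.id (alphaMap k H A W R ψ))
            ((iH k H A h₁) * R.rho (alphaMap k H A W R φ h₂))))
        (by intro a b c; simp [map_add, add_mul])
        (by intro t a c; simp [map_smul, smul_mul_assoc])
        (by intro a b c; simp [map_add, mul_add])
        (by intro t a c; simp [map_smul, mul_smul_comm]))) (W.comul h) := rfl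
  rw [expand]
  generalize W.comul h = w
  induction w using TensorProduct.induction_on with
  | zero => simp
  | tmul h₁ h₂ =>
    rw [TensorProduct.map_tmul, TensorProduct.lift.tmul, LinearMap.mk₂_apply, TMap_tmul]
    rfl
  | add w₁ w₂ ih1 ih2 => simp only [map_add, ih1, ih2]

lemma part4 (φ ψ : CC k H A W R →ₗ[k] A)
    (hφ : ∀ (b : A) (c : CC k H A W R), φ (lActMap k H A W R b c) = b * φ c)
    (hψ : ∀ (b : A) (c : CC k H A W R), ψ (lActMap k H A W R b c) = b * ψ c) :
    alphaMap k H A W R (starProd k H A W R φ ψ) =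
      prodH k H A W R (alphaMap k H A W R φ) (alphaMap k H A W R ψ) := by
  ext h
  show starProd k H A W R φ ψ (pH k H A W R h) = _
  rw [starProd_apply φ ψ hψ, lhs_chain, stepE φ ψ (part1 φ hφ), stepF]

end Aux5

/-- for a weak bialgebra `H` and a right `H`-comodule algebra
`A`, with `C = Im(g)` the associated `A`-coring, the left dual ring
`*C = ₐHom(C,A)` (with product `(φ#ψ)(c) = ψ(c₍₁₎ φ(c₍₂₎))`) is isomorphic,
via `α(φ)(h) = φ(1₍[0]₎ ⊗ h1₍[1]₎)`, to the ring
`Hom̲(H,A) = {f : H → A | f(h) = 1₍[0]₎ f(h1₍[1]₎)}` with multiplication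
`(f # g)(h) = f(h₍₂₎)₍[0]₎ g(h₍₁₎ f(h₍₂₎)₍[1]₎)`. -/
theorem starC_iso_underlineHom :
    -- `α` lands in `Hom̲(H,A)`
    (∀ φ : CC k H A W R →ₗ[k] A,
      (∀ (b : A) (c : CC k H A W R),
        φ (lActMap k H A W R b c) = b * φ c) →
      homCond k H A W R (alphaMap k H A W R φ)) ∧
    -- `α` is injective on `*C`
    (∀ φ ψ : CC k H A W R →ₗ[k] A,
      (∀ (b : A) (c : CC k H A W R), φ (lActMap k H A W R b c) = b * φ c) →
      (∀ (b : A) (c : CC k H A W R), ψ (lActMap k H A W R b c) = b * ψ c) →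
      alphaMap k H A W R φ = alphaMap k H A W R ψ → φ = ψ) ∧
    -- `α` is surjective onto `Hom̲(H,A)`
    (∀ f : H →ₗ[k] A, homCond k H A W R f →
      ∃ φ : CC k H A W R →ₗ[k] A,
        (∀ (b : A) (c : CC k H A W R), φ (lActMap k H A W R b c) = b * φ c) ∧
        alphaMap k H A W R φ = f) ∧
    -- `α` is multiplicative
    (∀ φ ψ : CC k H A W R →ₗ[k] A,
      (∀ (b : A) (c : CC k H A W R), φ (lActMap k H A W R b c) = b * φ c) →
      (∀ (b : A) (c : CC k H A W R), ψ (lActMap k H A W R b c) = b * ψ c) →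
      alphaMap k H A W R (starProd k H A W R φ ψ) =
        prodH k H A W R (alphaMap k H A W R φ) (alphaMap k H A W R ψ)) := by
  exact ⟨fun φ hφ => part1 φ hφ, fun φ ψ hφ hψ hα => part2 φ ψ hφ hψ hα,
    fun f hf => part3 f hf, fun φ ψ hφ hψ => part4 φ ψ hφ hψ⟩
end

section
/- Let G be a finite groupoid and k a commutative ring. There is an isomorphism between the category of right kG-comodule algebras and the category of G-graded k-algebras, i.e. algebras A = ⊕_{σ∈G₁} A_σ with A_σ A_τ ⊆ A_{στ} when t(τ)=s(σ), A_σ A_τ = 0 otherwise, and 1_A ∈ ⊕_{x∈G₀} A_x. -/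
/-- A finite groupoid, given by sets of objects and morphisms with source,
target, identities, partial composition and inverses. -/
structure FinGroupoid where
  O : Type
  M : Type
  [fO : Fintype O]
  [fM : Fintype M]
  [dO : DecidableEq O]
  [dM : DecidableEq M]
  s : M → O
  t : M → O
  e : O → M
  comp : M → M → M
  inv : M → M
  s_e : ∀ x, s (e x) = x
  t_e : ∀ x, t (e x) = x
  s_comp : ∀ σ τ, t τ = s σ → s (comp σ τ) = s τ
  t_comp : ∀ σ τ, t τ = s σ → t (comp σ τ) = t σ
  comp_assoc : ∀ σ τ ρ, t τ = s σ → t ρ = s τ →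
    comp (comp σ τ) ρ = comp σ (comp τ ρ)
  e_comp : ∀ σ, comp (e (t σ)) σ = σ
  comp_e : ∀ σ, comp σ (e (s σ)) = σ
  s_inv : ∀ σ, s (inv σ) = t σ
  t_inv : ∀ σ, t (inv σ) = s σ
  inv_comp : ∀ σ, comp (inv σ) σ = e (s σ)
  comp_inv : ∀ σ, comp σ (inv σ) = e (t σ)

attribute [instance] FinGroupoid.fO FinGroupoid.fM FinGroupoid.dO FinGroupoid.dM

/-- The multiplication of the groupoid algebra `kG`, on the free module
`G.M → k`:  `u_σ * u_τ = u_{στ}` if `t τ = s σ` and `0` otherwise. -/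
noncomputable def gmul (k : Type) [CommRing k] (G : FinGroupoid) (f g : G.M → k) :
    G.M → k := fun m =>
  ∑ p : G.M × G.M,
    if G.t p.2 = G.s p.1 ∧ G.comp p.1 p.2 = m then f p.1 * g p.2 else 0

/-- The unit `∑_{x ∈ G₀} u_{id_x}` of the groupoid algebra. -/
noncomputable def gone (k : Type) [CommRing k] (G : FinGroupoid) : G.M → k :=
  fun m => ∑ x : G.O, if G.e x = m then 1 else 0


/-- A right `kG`-comodule algebra structure on a `k`-algebra `A`; since `kG`
is free on the morphisms of `G`, the coaction `ρ : A → A ⊗ kG` is encoded by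
its components `ρ(a) = ∑_σ (rho a σ) ⊗ u_σ`. -/
structure CoactStr (k : Type) [CommRing k] (G : FinGroupoid) (A : Type)
    [Ring A] [Algebra k A] where
  rho : A →ₗ[k] (G.M → A)
  coassoc : ∀ (a : A) (σ τ : G.M),
    rho (rho a τ) σ = if σ = τ then rho a σ else 0
  counit : ∀ a : A, ∑ σ : G.M, rho a σ = a
  rho_mul : ∀ (a b : A) (σ : G.M), rho (a * b) σ =
    ∑ p : G.M × G.M,
      if G.t p.2 = G.s p.1 ∧ G.comp p.1 p.2 = σ then rho a p.1 * rho b p.2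
      else 0
  /-- `ρ(1) ∈ A ⊗ (kG)^L` -/
  weak : ∀ σ : G.M, (∀ x : G.O, σ ≠ G.e x) → rho 1 σ = 0

/-- A `G`-grading on a `k`-algebra `A`: a direct sum decomposition
`A = ⊕_{σ∈G₁} A_σ` with `A_σ A_τ ⊆ A_{στ}` when `t(τ)=s(σ)`, `A_σ A_τ = 0`
otherwise, and `1 ∈ ⊕_{x∈G₀} A_{id_x}`. -/
structure GradStr (k : Type) [CommRing k] (G : FinGroupoid) (A : Type)
    [Ring A] [Algebra k A] where
  sub : G.M → Submodule k A
  internal : DirectSum.IsInternal sub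
  mul_comp : ∀ σ τ : G.M, G.t τ = G.s σ →
    ∀ a ∈ sub σ, ∀ b ∈ sub τ, a * b ∈ sub (G.comp σ τ)
  mul_ncomp : ∀ σ τ : G.M, G.t τ ≠ G.s σ →
    ∀ a ∈ sub σ, ∀ b ∈ sub τ, a * b = 0
  one_mem : (1 : A) ∈ ⨆ x : G.O, sub (G.e x)


/-! The components `ρ(a)_σ` of the coaction are the homogeneous components of `a`:
coassociativity says that `ρ(a)_σ` lies in `A_σ = {a | ρ(a) = a ⊗ u_σ}` and counitality that
`a = ∑_σ ρ(a)_σ`, so the `A_σ` form a direct-sum decomposition whose projections are the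
`ρ(-)_σ`. On homogeneous elements, multiplicativity of `ρ` is exactly the rule
`A_σ A_τ ⊆ A_{στ}` (or `0` when `σ, τ` are not composable), and `ρ(1) ∈ A ⊗ (kG)^L` says that
`1` has components only at identities. Colinear maps are the maps preserving homogeneous
components, i.e. the graded maps. -/

lemma DirectSum.coeAddMonoidHom_eq_sum {ι M S : Type*} [Fintype ι] [DecidableEq ι]
    [AddCommMonoid M] [SetLike S M] [AddSubmonoidClass S M] (N : ι → S)
    (x : DirectSum ι fun i => N i) :
    DirectSum.coeAddMonoidHom N x = ∑ i, (x i : M) := by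
  conv_lhs => rw [← DirectSum.sum_univ_of x]
  simp only [map_sum, DirectSum.coeAddMonoidHom_of]

section

variable {k : Type} [CommRing k] {G : FinGroupoid} {A : Type} [Ring A] [Algebra k A]

namespace CoactStr

def sub (ρ : CoactStr k G A) (σ : G.M) : Submodule k A where
  carrier := {a : A | ∀ τ : G.M, ρ.rho a τ = if τ = σ then a else 0}
  zero_mem' τ := by simp
  add_mem' {a b} ha hb τ := by
    rw [map_add, Pi.add_apply, ha τ, hb τ]
    split_ifs <;> simp
  smul_mem' c a ha τ := by
    rw [map_smul, Pi.smul_apply, ha τ]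
    split_ifs <;> simp

variable (ρ : CoactStr k G A)

lemma rho_mem_sub (a : A) (σ : G.M) : ρ.rho a σ ∈ ρ.sub σ := fun τ => by
  rw [ρ.coassoc a τ σ]
  split_ifs with h <;> simp [h]

lemma rho_sum_of_mem_sub {c : G.M → A} (hc : ∀ τ, c τ ∈ ρ.sub τ) (σ : G.M) :
    ρ.rho (∑ τ, c τ) σ = c σ := by
  simp [map_sum, hc _ σ]

lemma rho_mul_of_mem_sub {σ τ : G.M} {a b : A} (ha : a ∈ ρ.sub σ) (hb : b ∈ ρ.sub τ)
    (μ : G.M) :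
    ρ.rho (a * b) μ = if G.t τ = G.s σ ∧ G.comp σ τ = μ then a * b else 0 := by
  rw [ρ.rho_mul, Fintype.sum_eq_single (σ, τ)]
  · simp [ha σ, hb τ]
  · rintro ⟨σ', τ'⟩ hne
    rw [ha σ', hb τ']
    split_ifs <;> simp_all

lemma isInternal_sub : DirectSum.IsInternal ρ.sub := by
  refine ⟨fun x y hxy => ?_, fun a => ?_⟩
  · have hρ (z : DirectSum G.M fun σ => ρ.sub σ) (τ : G.M) :
        ρ.rho (DirectSum.coeAddMonoidHom ρ.sub z) τ = z τ := by
      rw [DirectSum.coeAddMonoidHom_eq_sum]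
      exact ρ.rho_sum_of_mem_sub (fun σ => (z σ).2) τ
    ext τ
    rw [← hρ x, ← hρ y, hxy]
  · refine ⟨∑ σ, DirectSum.of (fun σ => ρ.sub σ) σ ⟨ρ.rho a σ, ρ.rho_mem_sub a σ⟩, ?_⟩
    simp only [map_sum, DirectSum.coeAddMonoidHom_of, ρ.counit]

lemma mul_eq_zero_of_mem_sub {σ τ : G.M} (hst : G.t τ ≠ G.s σ) {a b : A}
    (ha : a ∈ ρ.sub σ) (hb : b ∈ ρ.sub τ) : a * b = 0 := by
  rw [← ρ.counit (a * b)]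
  simp [ρ.rho_mul_of_mem_sub ha hb, hst]

def toGrad : GradStr k G A where
  sub := ρ.sub
  internal := ρ.isInternal_sub
  mul_comp σ τ hst a ha b hb μ := by
    rw [ρ.rho_mul_of_mem_sub ha hb]
    simp [hst, eq_comm]
  mul_ncomp _ _ hst _ ha _ hb := ρ.mul_eq_zero_of_mem_sub hst ha hb
  one_mem := by
    rw [← ρ.counit 1]
    refine Submodule.sum_mem _ fun σ _ => ?_
    by_cases hσ : ∃ x, σ = G.e x
    · obtain ⟨x, rfl⟩ := hσ
      exact Submodule.mem_iSup_of_mem x (ρ.rho_mem_sub 1 _)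
    · rw [ρ.weak σ (not_exists.mp hσ)]
      exact zero_mem _

lemma ext_rho {ρ₁ ρ₂ : CoactStr k G A} (h : ρ₁.rho = ρ₂.rho) : ρ₁ = ρ₂ := by
  cases ρ₁; cases ρ₂; cases h; rfl

lemma map_rho_eq_rho_map_iff {B : Type} [Ring B] [Algebra k B] (ρB : CoactStr k G B)
    (f : A →ₗ[k] B) :
    (∀ (a : A) (σ : G.M), f (ρ.rho a σ) = ρB.rho (f a) σ) ↔
      ∀ (σ : G.M) (a : A), a ∈ ρ.sub σ → f a ∈ ρB.sub σ := by
  refine ⟨fun hf σ a ha τ => ?_, fun hf a σ => ?_⟩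
  · rw [← hf, ha τ]
    split_ifs <;> simp
  · conv_rhs => rw [← ρ.counit a, map_sum]
    exact (ρB.rho_sum_of_mem_sub (fun τ => hf τ _ (ρ.rho_mem_sub a τ)) σ).symm

end CoactStr

namespace GradStr

variable (g : GradStr k G A)

noncomputable def proj (σ : G.M) : A →ₗ[k] A :=
  (g.sub σ).subtype ∘ₗ DirectSum.component k G.M (fun τ => g.sub τ) σ ∘ₗ
    (LinearEquiv.ofBijective (DirectSum.coeLinearMap g.sub) g.internal).symm.toLinearMap

lemma proj_apply (σ : G.M) (a : A) : g.proj σ a =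
    ((LinearEquiv.ofBijective (DirectSum.coeLinearMap g.sub) g.internal).symm a σ : A) :=
  rfl

lemma proj_mem (σ : G.M) (a : A) : g.proj σ a ∈ g.sub σ :=
  Submodule.coe_mem _

lemma proj_of_mem {σ : G.M} {a : A} (ha : a ∈ g.sub σ) (τ : G.M) :
    g.proj τ a = if τ = σ then a else 0 := by
  split_ifs with hτ
  · subst hτ
    rw [proj_apply, g.internal.ofBijective_coeLinearMap_of_mem ha]
  · rw [proj_apply, g.internal.ofBijective_coeLinearMap_of_mem_ne (Ne.symm hτ) ha,
      ZeroMemClass.coe_zero]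

lemma sum_proj (a : A) : ∑ σ, g.proj σ a = a := by
  conv_rhs =>
    rw [← (LinearEquiv.ofBijective (DirectSum.coeLinearMap g.sub) g.internal).apply_symm_apply a]
  exact (DirectSum.coeAddMonoidHom_eq_sum g.sub _).symm

lemma proj_mul_of_mem {σ τ : G.M} {a b : A} (ha : a ∈ g.sub σ) (hb : b ∈ g.sub τ) (μ : G.M) :
    g.proj μ (a * b) = if G.t τ = G.s σ ∧ G.comp σ τ = μ then a * b else 0 := by
  by_cases hst : G.t τ = G.s σ
  · simp [g.proj_of_mem (g.mul_comp σ τ hst a ha b hb), hst, eq_comm]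
  · simp [g.mul_ncomp σ τ hst a ha b hb, hst]

lemma proj_eq_zero_of_mem_iSup {ι : Type*} {f : ι → G.M} {a : A}
    (ha : a ∈ ⨆ i, g.sub (f i)) {σ : G.M} (hσ : ∀ i, σ ≠ f i) : g.proj σ a = 0 := by
  induction ha using Submodule.iSup_induction' with
  | mem i a ha => simp [g.proj_of_mem ha, hσ i]
  | zero => simp
  | add a b _ _ ha hb => simp [ha, hb]

noncomputable def toCoact : CoactStr k G A where
  rho := LinearMap.pi g.proj
  coassoc a σ τ := by
    simp only [LinearMap.pi_apply]
    rw [g.proj_of_mem (g.proj_mem τ a) σ]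
    split_ifs with h <;> simp [h]
  counit := g.sum_proj
  rho_mul a b σ := by
    simp only [LinearMap.pi_apply]
    conv_lhs => rw [← g.sum_proj a, ← g.sum_proj b, Finset.sum_mul_sum, ← Finset.sum_product',
      Finset.univ_product_univ, map_sum]
    exact Finset.sum_congr rfl fun p _ => g.proj_mul_of_mem (g.proj_mem _ a) (g.proj_mem _ b) σ
  weak σ hσ := g.proj_eq_zero_of_mem_iSup g.one_mem hσ

lemma toCoact_sub : g.toCoact.sub = g.sub := by
  ext σ a
  refine ⟨fun ha => ?_, fun ha => g.proj_of_mem ha⟩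
  have hσ : g.proj σ a = a := by simpa [toCoact] using ha σ
  exact hσ ▸ g.proj_mem σ a

lemma ext_sub {g₁ g₂ : GradStr k G A} (h : g₁.sub = g₂.sub) : g₁ = g₂ := by
  cases g₁; cases g₂; cases h; rfl

end GradStr

noncomputable def coactEquivGrad : CoactStr k G A ≃ GradStr k G A where
  toFun := CoactStr.toGrad
  invFun := GradStr.toCoact
  left_inv ρ := CoactStr.ext_rho <| LinearMap.ext fun a => funext fun σ => by
    conv_lhs => rw [← ρ.counit a]
    refine ρ.toGrad.toCoact.rho_sum_of_mem_sub (fun τ => ?_) σ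
    rw [GradStr.toCoact_sub]
    exact ρ.rho_mem_sub a τ
  right_inv g := GradStr.ext_sub g.toCoact_sub

end

/-- for a finite groupoid `G` and a commutative ring `k`, the
category of right `kG`-comodule algebras is isomorphic to the category of
`G`-graded `k`-algebras: there is a bijection between `kG`-comodule algebra
structures and `G`-gradings, sending a coaction `ρ` to the grading with
`A_σ = {a | ρ(a) = a ⊗ u_σ}`, under which an algebra map is colinear if and
only if it is graded. -/
theorem kG_comodule_algebras_are_graded_algebras
    (k : Type) [CommRing k] (G : FinGroupoid) :
    ∃ e : ∀ (A : Type) (_ : Ring A) (_ : Algebra k A),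
        CoactStr k G A ≃ GradStr k G A,
      (∀ (A : Type) (iR : Ring A) (iA : Algebra k A)
        (ρ : CoactStr k G A) (σ : G.M),
        ((e A iR iA ρ).sub σ : Set A) =
          {a : A | ∀ τ : G.M, ρ.rho a τ = if τ = σ then a else 0}) ∧
      (∀ (A : Type) (iR : Ring A) (iA : Algebra k A)
        (B : Type) (iR' : Ring B) (iA' : Algebra k B)
        (ρA : CoactStr k G A) (ρB : CoactStr k G B) (f : A →ₐ[k] B),
        (∀ (a : A) (σ : G.M), f (ρA.rho a σ) = ρB.rho (f a) σ) ↔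
        (∀ (σ : G.M) (a : A),
          a ∈ (e A iR iA ρA).sub σ → f a ∈ (e B iR' iA' ρB).sub σ)) :=
  ⟨fun _ _ _ => coactEquivGrad, fun _ _ _ _ _ => rfl,
    fun _ _ _ _ _ _ ρA ρB f => ρA.map_rho_eq_rho_map_iff ρB f.toLinearMap⟩
end

section
/- Let G be a finite groupoid and A a G-graded k-algebra. For every right module N over T = ⊕_{x∈G₀} A_x, the unit map ν_N: N → (N ⊗_T A)^{co kG}, ν_N(n) = ∑_{x∈G₀} n·1_x ⊗_T 1_x, is bijective, with inverse sending n_x ⊗ a_x to n_x a_x. -/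
/-- A `G`-graded `k`-algebra, encoded by the projections
`π σ : A → A_σ` onto the homogeneous components. -/
structure GradedAlg (k : Type) [CommRing k] (G : FinGroupoid) (A : Type)
    [Ring A] [Algebra k A] where
  π : G.M → (A →ₗ[k] A)
  sum_pi : ∀ a : A, ∑ σ : G.M, π σ a = a
  pi_pi : ∀ (σ τ : G.M) (a : A), π σ (π τ a) = if σ = τ then π τ a else 0
  mul_comp : ∀ (σ τ : G.M) (a b : A), G.t τ = G.s σ →
    π σ a * π τ b = π (G.comp σ τ) (π σ a * π τ b)
  mul_ncomp : ∀ (σ τ : G.M) (a b : A), G.t τ ≠ G.s σ → π σ a * π τ b = 0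
  one_supp : ∀ σ : G.M, (∀ x : G.O, σ ≠ G.e x) → π σ 1 = 0


open TensorProduct

variable (k : Type) [CommRing k] (G : FinGroupoid) (A : Type) [Ring A] [Algebra k A]

/-- The subring `T = ⊕_{x∈G₀} A_x` of degree-identity components. -/
def Tset (gr : GradedAlg k G A) : Set A :=
  {a : A | ∀ σ : G.M, (∀ x : G.O, σ ≠ G.e x) → gr.π σ a = 0}

variable (N : Type) [AddCommGroup N] [Module k N]

/-- The `T`-balancing relations in `N ⊗ₖ A`, for a right `T`-action `ract`
on `N`; the quotient is `N ⊗_T A`. -/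
noncomputable def balT (gr : GradedAlg k G A) (ract : A → N →ₗ[k] N) :
    Submodule k (N ⊗[k] A) :=
  Submodule.span k {z | ∃ (n : N) (a t : A), t ∈ Tset k G A gr ∧
    z = (ract t n) ⊗ₜ[k] a - n ⊗ₜ[k] (t * a)}

/-- The unit map `ν_N : N → N ⊗_T A`, `ν_N(n) = ∑_{x∈G₀} n·1_x ⊗ 1_x`. -/
noncomputable def nuMap (gr : GradedAlg k G A) (ract : A → N →ₗ[k] N) :
    N → (N ⊗[k] A) ⧸ balT k G A N gr ract := fun n =>
  ∑ x : G.O, Submodule.Quotient.mk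
    ((ract (gr.π (G.e x) 1) n) ⊗ₜ[k] gr.π (G.e x) 1)

/-- The coinvariants `(N ⊗_T A)^{co kG} = ⊕_{x∈G₀} N ⊗_T A_x`: the image of
`N ⊗ₖ T` in `N ⊗_T A`. -/
noncomputable def CoSub (gr : GradedAlg k G A) (ract : A → N →ₗ[k] N) :
    Submodule k ((N ⊗[k] A) ⧸ balT k G A N gr ract) :=
  Submodule.span k {y | ∃ (n : N) (a : A), a ∈ Tset k G A gr ∧
    y = Submodule.Quotient.mk (n ⊗ₜ[k] a)}


/-!
Let `T = ⊕_{x ∈ G₀} A_x` and `π_T = ∑_x π_{id_x} : A → T`. Because a degree-identity element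
times an element of `A_σ` lies in `A_σ`, the projection `π_T` is left `T`-linear, so
`n ⊗ a ↦ n · π_T(a)` descends to `N ⊗_T A` and is a left inverse of `ν_N`. On the other hand the
`1_x = π_{id_x}(1)` are idempotents summing to `1`, whence `ν_N(n) = n ⊗ 1`, and every generator
`n ⊗ t` (`t ∈ T`) of the coinvariants equals `n t ⊗ 1 = ν_N(n t)`.
-/

lemma FinGroupoid.e_injective (G : FinGroupoid) : Function.Injective G.e := fun x y h => by
  rw [← G.s_e x, h, G.s_e]

namespace GradedAlg

variable {k G A} (gr : GradedAlg k G A)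

lemma pi_e_one_mem_Tset (x : G.O) : gr.π (G.e x) 1 ∈ Tset k G A gr := fun σ hσ => by
  rw [gr.pi_pi, if_neg (hσ x)]

lemma one_mem_Tset : (1 : A) ∈ Tset k G A gr := gr.one_supp

lemma sum_pi_e_of_mem_Tset {t : A} (ht : t ∈ Tset k G A gr) :
    ∑ x, gr.π (G.e x) t = t := by
  conv_rhs => rw [← gr.sum_pi t]
  exact Fintype.sum_of_injective G.e G.e_injective _ _
    (fun σ hσ => ht σ fun x h => hσ ⟨x, h.symm⟩) fun _ => rfl

lemma sum_pi_e_one : ∑ x, gr.π (G.e x) (1 : A) = 1 :=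
  gr.sum_pi_e_of_mem_Tset gr.one_mem_Tset

lemma pi_e_mul_pi (y : G.O) (σ : G.M) (a b : A) :
    gr.π (G.e y) a * gr.π σ b = gr.π σ (gr.π (G.e y) a * gr.π σ b) := by
  by_cases h : G.t σ = G.s (G.e y)
  · have hcomp : G.comp (G.e y) σ = σ := by rw [G.s_e] at h; rw [← h, G.e_comp]
    conv_lhs => rw [gr.mul_comp _ _ _ _ h, hcomp]
  · rw [gr.mul_ncomp _ _ _ _ h, map_zero]

lemma mul_pi_e_of_mem_Tset {t : A} (ht : t ∈ Tset k G A gr) (a : A) (x : G.O) :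
    t * gr.π (G.e x) a = gr.π (G.e x) (t * a) := by
  have homogeneous : ∀ y σ, gr.π (G.e y) t * gr.π (G.e x) (gr.π σ a) =
      gr.π (G.e x) (gr.π (G.e y) t * gr.π σ a) := fun y σ => by
    rw [gr.pi_pi, gr.pi_e_mul_pi y σ t a, gr.pi_pi]
    split_ifs
    · exact gr.pi_e_mul_pi y σ t a
    · exact mul_zero _
  conv_lhs => rw [← gr.sum_pi_e_of_mem_Tset ht, ← gr.sum_pi a]
  conv_rhs => rw [← gr.sum_pi_e_of_mem_Tset ht, ← gr.sum_pi a]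
  simp only [map_sum, Finset.sum_mul, Finset.mul_sum, homogeneous]

lemma pi_e_one_mul_self (x : G.O) :
    gr.π (G.e x) 1 * gr.π (G.e x) 1 = gr.π (G.e x) (1 : A) := by
  rw [gr.mul_pi_e_of_mem_Tset (gr.pi_e_one_mem_Tset x), mul_one, gr.pi_pi, if_pos rfl]

noncomputable def projT : A →ₗ[k] A := ∑ x, gr.π (G.e x)

lemma projT_apply (a : A) : gr.projT a = ∑ x, gr.π (G.e x) a :=
  LinearMap.sum_apply _ _ _

lemma projT_mem_Tset (a : A) : gr.projT a ∈ Tset k G A gr := fun σ hσ => by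
  simp [projT_apply, gr.pi_pi, hσ]

lemma projT_one : gr.projT 1 = 1 := by
  rw [projT_apply, sum_pi_e_one]

lemma mul_projT_of_mem_Tset {t : A} (ht : t ∈ Tset k G A gr) (a : A) :
    t * gr.projT a = gr.projT (t * a) := by
  simp only [projT_apply, Finset.mul_sum, gr.mul_pi_e_of_mem_Tset ht]

end GradedAlg

section UnitMap

variable {k G A N} {gr : GradedAlg k G A} {ract : A → N →ₗ[k] N}

lemma mk_ract_tmul {t : A} (ht : t ∈ Tset k G A gr) (n : N) (a : A) :
    (Submodule.Quotient.mk (ract t n ⊗ₜ[k] a) : (N ⊗[k] A) ⧸ balT k G A N gr ract) =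
      Submodule.Quotient.mk (n ⊗ₜ[k] (t * a)) :=
  (Submodule.Quotient.eq _).2 (Submodule.subset_span ⟨n, a, t, ht, rfl⟩)

lemma nuMap_apply (n : N) :
    nuMap k G A N gr ract n = Submodule.Quotient.mk (n ⊗ₜ[k] 1) := by
  simp only [nuMap, mk_ract_tmul (gr.pi_e_one_mem_Tset _), gr.pi_e_one_mul_self,
    ← Submodule.mkQ_apply, ← map_sum, ← tmul_sum, gr.sum_pi_e_one]

lemma mk_tmul_eq_nuMap {a : A} (ha : a ∈ Tset k G A gr) (n : N) :
    Submodule.Quotient.mk (n ⊗ₜ[k] a) = nuMap k G A N gr ract (ract a n) := by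
  rw [nuMap_apply, mk_ract_tmul ha, mul_one]

lemma nuMap_mem_CoSub (n : N) : nuMap k G A N gr ract n ∈ CoSub k G A N gr ract :=
  Submodule.subset_span ⟨n, 1, gr.one_mem_Tset, nuMap_apply n⟩

lemma exists_nuMap_eq_of_mem_CoSub {y : (N ⊗[k] A) ⧸ balT k G A N gr ract}
    (hy : y ∈ CoSub k G A N gr ract) : ∃ n, nuMap k G A N gr ract n = y := by
  have hle : CoSub k G A N gr ract ≤
      LinearMap.range ((balT k G A N gr ract).mkQ ∘ₗ (TensorProduct.mk k N A).flip 1) :=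
    Submodule.span_le.2 <| by
      rintro _ ⟨n, a, ha, rfl⟩
      exact ⟨ract a n, by simp [mk_tmul_eq_nuMap ha, nuMap_apply]⟩
  obtain ⟨n, rfl⟩ := hle hy
  exact ⟨n, nuMap_apply n⟩

variable (hmul : ∀ t t' : A, t ∈ Tset k G A gr → t' ∈ Tset k G A gr →
      ∀ n : N, ract (t * t') n = ract t' (ract t n))
    (hadd : ∀ t t' : A, t ∈ Tset k G A gr → t' ∈ Tset k G A gr →
      ract (t + t') = ract t + ract t')
    (hsmul : ∀ (c : k) (t : A), t ∈ Tset k G A gr → ract (c • t) = c • ract t)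

noncomputable def nuInv : (N ⊗[k] A) ⧸ balT k G A N gr ract →ₗ[k] N :=
  (balT k G A N gr ract).liftQ
    (TensorProduct.lift <| LinearMap.mk₂ k (fun n a => ract (gr.projT a) n)
      (fun _ _ _ => map_add _ _ _) (fun _ _ _ => map_smul _ _ _)
      (fun n a a' => by
        rw [map_add, hadd _ _ (gr.projT_mem_Tset a) (gr.projT_mem_Tset a'),
          LinearMap.add_apply])
      (fun c n a => by
        rw [map_smul, hsmul c _ (gr.projT_mem_Tset a), LinearMap.smul_apply]))
    (Submodule.span_le.2 <| by
      rintro _ ⟨n, a, t, ht, rfl⟩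
      simp [← hmul t _ ht (gr.projT_mem_Tset a), gr.mul_projT_of_mem_Tset ht])

lemma nuInv_leftInverse (hone : ∀ n : N, ract 1 n = n) :
    Function.LeftInverse (nuInv hmul hadd hsmul) (nuMap k G A N gr ract) := fun n => by
  rw [nuMap_apply]
  change ract (gr.projT 1) n = n
  rw [gr.projT_one, hone]

end UnitMap

/-- let `G` be a finite groupoid, `A` a `G`-graded `k`-algebra,
`T = ⊕_{x∈G₀} A_x`, and `N` a right `T`-module.  The unit map
`ν_N : N → (N ⊗_T A)^{co kG}`, `ν_N(n) = ∑_{x∈G₀} n·1_x ⊗ 1_x`, is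
bijective. -/
theorem unit_map_bijective (gr : GradedAlg k G A) (ract : A → N →ₗ[k] N)
    -- `ract` is a right action of the subring `T` on `N`:
    (hmul : ∀ t t' : A, t ∈ Tset k G A gr → t' ∈ Tset k G A gr →
      ∀ n : N, ract (t * t') n = ract t' (ract t n))
    (hone : ∀ n : N, ract 1 n = n)
    (hadd : ∀ t t' : A, t ∈ Tset k G A gr → t' ∈ Tset k G A gr →
      ract (t + t') = ract t + ract t')
    (hsmul : ∀ (c : k) (t : A), t ∈ Tset k G A gr →
      ract (c • t) = c • ract t) :
    (∀ n : N, nuMap k G A N gr ract n ∈ CoSub k G A N gr ract) ∧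
    Function.Injective (nuMap k G A N gr ract) ∧
    (∀ y ∈ CoSub k G A N gr ract, ∃ n : N, nuMap k G A N gr ract n = y) :=
  ⟨nuMap_mem_CoSub, (nuInv_leftInverse hmul hadd hsmul hone).injective,
    fun _ => exists_nuMap_eq_of_mem_CoSub⟩
end

section
/- Let G be a finite groupoid and A a left G-module algebra. Then the left dual ring Hom̲(Gk, A) of the associated coring decomposes as ⊕_{σ∈G₁} U_σ A_σ where U_σ = u_σ(σ·1_A), with multiplication U_σ # U_τ = U_{τσ} (interpreted as 0 when τσ is undefined), left A-action a·U_σ = U_σ(σ·a), and unit ∑_{x∈G₀} U_x. -/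
/-- A left `G`-module algebra: a `k`-algebra `A` with a left `kG`-module
structure such that each `σ ∈ G₁` acts by `σ·(ab) = (σ·a)(σ·b)`, and the
weak unit conditions `σ·1 = t(σ)·1`, `a(σ·1) = t(σ)·a = (σ·1)a` hold. -/
structure GModAlg (k : Type) [CommRing k] (G : FinGroupoid) (A : Type)
    [Ring A] [Algebra k A] where
  act : G.M → (A →ₗ[k] A)
  act_mul : ∀ (σ : G.M) (a b : A), act σ (a * b) = act σ a * act σ b
  act_comp : ∀ σ τ : G.M, G.t τ = G.s σ →
    ∀ a : A, act σ (act τ a) = act (G.comp σ τ) a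
  act_ncomp : ∀ σ τ : G.M, G.t τ ≠ G.s σ →
    ∀ a : A, act σ (act τ a) = 0
  act_unit : ∀ a : A, ∑ x : G.O, act (G.e x) a = a
  act_one : ∀ σ : G.M, act σ 1 = act (G.e (G.t σ)) 1
  absorb_r : ∀ (σ : G.M) (a : A), a * act σ 1 = act (G.e (G.t σ)) a
  absorb_l : ∀ (σ : G.M) (a : A), act σ 1 * a = act (G.e (G.t σ)) a


variable (k : Type) [CommRing k] (G : FinGroupoid) (A : Type) [Ring A] [Algebra k A]

/-- `U_σ = u_σ (σ·1_A)`, as an element of `Hom(Gk,A) ≅ (G₁ → A)`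
(a map is recorded by its values on the dual basis `{v_σ}`). -/
noncomputable def Uel (g : GModAlg k G A) (σ : G.M) : G.M → A :=
  fun τ => if τ = σ then g.act σ 1 else 0

/-- The multiplication `(f # g)(v_λ) = ∑_{μν=λ} (μ·f(v_ν)) g(v_μ)` of the
left dual ring `Hom̲(Gk,A)`, transported to `G₁ → A`. -/
noncomputable def hmul (g : GModAlg k G A) (f f' : G.M → A) : G.M → A :=
  fun lam => ∑ p : G.M × G.M,
    if G.t p.2 = G.s p.1 ∧ G.comp p.1 p.2 = lam
    then g.act p.1 (f p.2) * f' p.1 else 0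

/-- Membership in `Hom̲(Gk,A) ⊆ Hom(Gk,A)`: `f(v_σ) ∈ A_σ = (σ·1)A`. -/
def Rmem (g : GModAlg k G A) (f : G.M → A) : Prop :=
  ∀ σ : G.M, g.act σ 1 * f σ = f σ

/-- The left `A`-action `(a·f)(v_τ) = (τ·a) f(v_τ)` on `Hom̲(Gk,A)`. -/
noncomputable def aAct (g : GModAlg k G A) (a : A) (f : G.M → A) : G.M → A :=
  fun τ => g.act τ a * f τ

/-- for a finite groupoid `G` and a `G`-module algebra `A`, the
left dual ring `Hom̲(Gk,A)` of the associated coring decomposes as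
`⊕_{σ∈G₁} U_σ A_σ` with `U_σ = u_σ(σ·1)`, the multiplication is
`U_σ # U_τ = U_{τσ}` (zero when `τσ` is undefined), the left `A`-action
satisfies `a·U_σ = U_σ(σ·a)`, and `∑_{x∈G₀} U_x` is the unit. -/
theorem dual_ring_structure (g : GModAlg k G A) :
    -- the `U_σ` lie in `Hom̲(Gk,A)` and `Hom̲(Gk,A) = ⊕_σ U_σ A_σ`
    (∀ σ : G.M, Rmem k G A g (Uel k G A g σ)) ∧
    (∀ f : G.M → A, Rmem k G A g f ↔
      ∀ σ : G.M, ∃ b : A, f σ = g.act σ 1 * b) ∧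
    -- `U_σ # U_τ = U_{τσ}`, `0` if `τσ` undefined
    (∀ σ τ : G.M,
      (G.t σ = G.s τ →
        hmul k G A g (Uel k G A g σ) (Uel k G A g τ) =
          Uel k G A g (G.comp τ σ)) ∧
      (G.t σ ≠ G.s τ →
        hmul k G A g (Uel k G A g σ) (Uel k G A g τ) = 0)) ∧
    -- `a · U_σ = U_σ (σ·a)`
    (∀ (a : A) (σ : G.M),
      aAct k G A g a (Uel k G A g σ) =
        fun τ => Uel k G A g σ τ * g.act σ a) ∧
    -- `∑_x U_x` is the unit of `Hom̲(Gk,A)`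
    (∀ f : G.M → A, Rmem k G A g f →
      hmul k G A g (∑ x : G.O, Uel k G A g (G.e x)) f = f ∧
      hmul k G A g f (∑ x : G.O, Uel k G A g (G.e x)) = f) := by
  have eA : ∀ (σ : G.M) (a : A), g.act (G.e (G.t σ)) (g.act σ a) = g.act σ a := by
    intro σ a
    rw [g.act_comp _ _ (by rw [G.s_e]), G.e_comp]
  have one_mul_act : ∀ (σ : G.M) (a : A), g.act σ 1 * g.act σ a = g.act σ a := by
    intro σ a; rw [g.absorb_l, eA]
  have act_mul_one : ∀ (σ : G.M) (a : A), g.act σ a * g.act σ 1 = g.act σ a := by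
    intro σ a; rw [g.absorb_r, eA]
  have idem : ∀ σ : G.M, g.act σ 1 * g.act σ 1 = g.act σ 1 := fun σ =>
    one_mul_act σ 1
  have rmem_act : ∀ (f : G.M → A), Rmem k G A g f →
      ∀ lam : G.M, g.act (G.e (G.t lam)) (f lam) = f lam := by
    intro f hf lam
    rw [← g.absorb_l, hf]
  refine ⟨?_, ?_, ?_, ?_, ?_⟩
  · -- Rmem of Uel
    intro σ τ
    simp only [Uel]
    by_cases h : τ = σ
    · subst h; simp [idem]
    · simp [h]
  · -- decomposition
    intro f
    constructor
    · intro hf σ; exact ⟨f σ, (hf σ).symm⟩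
    · intro hf σ
      obtain ⟨b, hb⟩ := hf σ
      rw [hb, ← mul_assoc, idem]
  · -- multiplication
    intro σ τ
    constructor
    · intro h
      funext lam
      simp only [hmul, Uel]
      rw [Fintype.sum_eq_single (τ, σ) (by
        rintro ⟨μ, ν⟩ hp
        by_cases hν : ν = σ
        · by_cases hμ : μ = τ
          · exact absurd (by rw [hν, hμ]) hp
          · simp [hμ]
        · simp [hν])]
      simp only [if_pos rfl]
      by_cases hlam : lam = G.comp τ σ
      · rw [if_pos ⟨h, hlam.symm⟩, if_pos hlam]
        simp only [if_true]
        rw [g.act_comp τ σ h, g.act_one (G.comp τ σ), G.t_comp τ σ h,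
          ← g.act_one τ, act_mul_one, g.act_one τ, ← G.t_comp τ σ h,
          ← g.act_one (G.comp τ σ)]
      · rw [if_neg (by rintro ⟨-, h2⟩; exact hlam h2.symm), if_neg hlam]
    · intro h
      funext lam
      simp only [hmul, Uel]
      rw [Finset.sum_eq_zero]
      · simp
      rintro ⟨μ, ν⟩ -
      by_cases hν : ν = σ
      · by_cases hμ : μ = τ
        · subst hν; subst hμ
          rw [if_neg (by rintro ⟨h1, -⟩; exact h h1)]
        · simp [hμ]
      · simp [hν]
  · -- A-action
    intro a σ
    funext τ
    simp only [aAct, Uel]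
    by_cases h : τ = σ
    · subst h
      simp only [if_pos rfl, if_true]
      rw [act_mul_one, one_mul_act]
    · simp [h]
  · -- unit
    intro f hf
    have e_inj : ∀ x y : G.O, G.e x = G.e y → x = y := by
      intro x y hxy
      rw [← G.s_e x, hxy, G.s_e]
    constructor
    · funext lam
      simp only [hmul, Uel, Finset.sum_apply]
      rw [Fintype.sum_eq_single (lam, G.e (G.s lam)) (by
        rintro ⟨μ, ν⟩ hp
        by_cases hc : G.t ν = G.s μ ∧ G.comp μ ν = lam
        · rw [if_pos hc]
          by_cases hν : ∃ x : G.O, ν = G.e x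
          · obtain ⟨x, rfl⟩ := hν
            have hx : x = G.s μ := by rw [← G.t_e x, hc.1]
            have hμ : μ = lam := by rw [← hc.2, hx, G.comp_e]
            exact absurd (by rw [hμ, hx, ← hμ]) hp
          · have : (∑ x : G.O, if ν = G.e x then g.act (G.e x) 1 else 0) = 0 := by
              apply Finset.sum_eq_zero
              intro x _
              rw [if_neg (fun hh => hν ⟨x, hh⟩)]
            rw [this, map_zero, zero_mul]
        · rw [if_neg hc])]
      rw [if_pos ⟨by rw [G.t_e], G.comp_e lam⟩]
      have : (∑ x : G.O, if G.e (G.s lam) = G.e x then g.act (G.e x) 1 else 0)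
          = g.act (G.e (G.s lam)) 1 := by
        rw [Fintype.sum_eq_single (G.s lam) (by
          intro x hx
          rw [if_neg (fun hh => hx (e_inj _ _ hh).symm)]), if_pos rfl]
      rw [this, g.act_comp lam (G.e (G.s lam)) (by rw [G.t_e]), G.comp_e, hf]
    · funext lam
      simp only [hmul, Uel, Finset.sum_apply]
      rw [Fintype.sum_eq_single (G.e (G.t lam), lam) (by
        rintro ⟨μ, ν⟩ hp
        by_cases hc : G.t ν = G.s μ ∧ G.comp μ ν = lam
        · rw [if_pos hc]
          by_cases hμ : ∃ x : G.O, μ = G.e x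
          · obtain ⟨x, rfl⟩ := hμ
            have hx : G.t ν = x := by rw [hc.1, G.s_e]
            have hν : ν = lam := by
              rw [← hc.2, ← hx, G.e_comp]
            have : G.t lam = x := by rw [← hν, hx]
            exact absurd (by rw [this, hν]) hp
          · have : (∑ x : G.O, if μ = G.e x then g.act (G.e x) 1 else 0) = 0 := by
              apply Finset.sum_eq_zero
              intro x _
              rw [if_neg (fun hh => hμ ⟨x, hh⟩)]
            rw [this, mul_zero]
        · rw [if_neg hc])]
      rw [if_pos ⟨by rw [G.s_e], G.e_comp lam⟩]
      have : (∑ x : G.O, if G.e (G.t lam) = G.e x then g.act (G.e x) 1 else 0)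
          = g.act (G.e (G.t lam)) 1 := by
        rw [Fintype.sum_eq_single (G.t lam) (by
          intro x hx
          rw [if_neg (fun hh => hx (e_inj _ _ hh).symm)]), if_pos rfl]
      rw [this, act_mul_one, rmem_act f hf]
end

section
/- Let G be a finite groupoid and A a G-module algebra with invariant subring T = A^G = {a ∈ A | σ·a = t(σ)·a for all σ ∈ G₁}. The element q_a of Hom(Gk,A) determined by a ∈ A via q_a(v_τ) = τ·(a·(s(τ)·1_A)) lies in the module Q = {f ∈ Hom̲(Gk,A) | f(h₍₂₎)₍[0]₎ ⊗ h₍₁₎ f(h₍₂₎)₍[1]₎ = f(h) 1₍[0]₎ ⊗ 1₍[1]₎ for all h}, and the assignment a ↦ q_a is a bijection between A and Q. -/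
variable (k : Type) [CommRing k] (G : FinGroupoid) (A : Type) [Ring A] [Algebra k A]

/-- The bimodule
`Q = {f ∈ Hom̲(Gk,A) | f(h₍₂₎)₍[0]₎ ⊗ h₍₁₎ f(h₍₂₎)₍[1]₎ = f(h) 1₍[0]₎ ⊗ 1₍[1]₎}`
of the Morita context, transported to `G₁ → A`: componentwise, the defining
condition reads `∑_{μν=τ} μ·f(v_ν) = (μ·1) f(v_τ)` for all `τ, μ`. -/
def Qmem (g : GModAlg k G A) (f : G.M → A) : Prop :=
  Rmem k G A g f ∧
  ∀ τ μ : G.M,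
    (∑ ν : G.M, if G.t ν = G.s μ ∧ G.comp μ ν = τ then g.act μ (f ν) else 0) =
      g.act μ 1 * f τ

/-- The map `a ↦ q_a`, `q_a(v_τ) = τ·(a·(s(τ)·1))`. -/
noncomputable def qmap (g : GModAlg k G A) (a : A) : G.M → A :=
  fun τ => g.act τ (a * g.act (G.e (G.s τ)) 1)


lemma qmap_eq (g : GModAlg k G A) (a : A) (τ : G.M) :
    qmap k G A g a τ = g.act τ a := by
  unfold qmap
  rw [g.absorb_r, G.t_e, g.act_comp τ (G.e (G.s τ)) (by rw [G.t_e]), G.comp_e]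

lemma act_skew (g : GModAlg k G A) (f : G.M → A) (hf : Rmem k G A g f)
    (τ ν : G.M) (h : G.t ν ≠ G.s τ) : g.act τ (f ν) = 0 := by
  have h1 : g.act τ (f ν) = g.act τ (g.act ν 1 * f ν) := by rw [hf ν]
  rw [g.act_mul] at h1
  have h2 : g.act τ (g.act ν 1) = 0 := by
    rw [g.act_one ν]
    exact g.act_ncomp τ (G.e (G.t ν)) (by rw [G.t_e]; exact h) 1
  rw [h1, h2, zero_mul]

lemma unique_nu (ν μ τ : G.M) (h1 : G.t ν = G.s μ) (h2 : G.comp μ ν = τ) :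
    ν = G.comp (G.inv μ) τ := by
  have h3 := G.comp_assoc (G.inv μ) μ ν (G.s_inv μ).symm h1
  rw [G.inv_comp, ← h1, G.e_comp ν, h2] at h3
  exact h3

lemma sum_ids (g : GModAlg k G A) (a : A) :
    ∑ x : G.O, qmap k G A g a (G.e x) = a := by
  simp only [qmap_eq]
  exact g.act_unit a

/-- for a finite groupoid `G` and a `G`-module algebra `A`,
the assignment `a ↦ q_a` with `q_a(v_τ) = τ·(a·(s(τ)·1))` takes values in the
module `Q` and is a bijection between `A` and `Q`. -/
theorem Q_bijection (g : GModAlg k G A) :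
    (∀ a : A, Qmem k G A g (qmap k G A g a)) ∧
    Function.Injective (qmap k G A g) ∧
    (∀ f : G.M → A, Qmem k G A g f → ∃ a : A, qmap k G A g a = f) := by
  refine ⟨?_, ?_, ?_⟩
  · intro a
    constructor
    · intro σ
      rw [qmap_eq, ← g.act_mul, one_mul]
    · intro τ μ
      simp only [qmap_eq]
      by_cases h : G.t τ = G.t μ
      · have hs : G.t τ = G.s (G.inv μ) := h.trans (G.s_inv μ).symm
        have hν : G.t (G.comp (G.inv μ) τ) = G.s μ := by
          rw [G.t_comp _ _ hs, G.t_inv]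
        have hc : G.comp μ (G.comp (G.inv μ) τ) = τ := by
          rw [← G.comp_assoc μ (G.inv μ) τ (G.t_inv μ) hs, G.comp_inv, ← h,
            G.e_comp]
        rw [Fintype.sum_eq_single (G.comp (G.inv μ) τ)]
        · rw [if_pos ⟨hν, hc⟩, g.act_comp μ _ hν, hc, g.absorb_l,
            g.act_comp _ _ (by rw [G.s_e]; exact h), ← h, G.e_comp]
        · intro ν hne
          rw [if_neg]
          rintro ⟨h1, h2⟩
          exact hne (unique_nu G ν μ τ h1 h2)
      · rw [Finset.sum_eq_zero, g.absorb_l,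
          g.act_ncomp (G.e (G.t μ)) τ (by rw [G.s_e]; exact h) a]
        intro ν _
        rw [if_neg]
        rintro ⟨h1, h2⟩
        exact h (by rw [← h2, G.t_comp μ ν h1])
  · intro a b hab
    rw [← sum_ids k G A g a, ← sum_ids k G A g b, hab]
  · intro f hf
    refine ⟨∑ x : G.O, f (G.e x), funext fun τ => ?_⟩
    rw [qmap_eq, map_sum]
    have h1 : ∑ x : G.O, g.act τ (f (G.e x)) = g.act τ (f (G.e (G.s τ))) := by
      apply Fintype.sum_eq_single
      intro x hx
      exact act_skew k G A g f hf.1 τ (G.e x) (by rw [G.t_e]; exact hx)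
    have h2 := hf.2 τ τ
    rw [Fintype.sum_eq_single (G.e (G.s τ)), if_pos ⟨G.t_e _, G.comp_e τ⟩]
      at h2
    · rw [h1, h2]; exact hf.1 τ
    · intro ν hne
      rw [if_neg]
      rintro ⟨ha, hb⟩
      exact hne ((unique_nu G ν τ τ ha hb).trans (G.inv_comp τ))
end
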